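/- arXiv:1903.08384 — 16 statements merged into one kernel-verified Lean document; each statement's English description precedes it below -/
import Mathlib

section
/- Let d ≥ 1 and let v : (Fin n → ℝ) → ℝ be d-SOS. Let A ⊆ Fin n and B = Aᶜ. Then for all vectors s, y : Fin n → ℝ with s ≥ 0 and y ≥ 0, and all vectors s' : Fin n → ℝ with s'(j) ≥ s(j) ≥ 0 for every j ∈ B, one has d·( v(t₁) − v(t₀) ) ≥ v(t₁') − v(t₀'), where t₀ agrees with s everywhere, t₁ agrees with s+y on A and with s on B, t₀' agrees with s on A and with s' on B, and t₁' agrees with s+y on A and with s' on B. -/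
/-!
Raise the coordinates of `A` from `s` to `s + y` one at a time. Both sides telescope into
single-coordinate marginals, and before each step the profile carrying `s'` off `A` dominates the
one carrying `s` there while the two agree at the coordinate being raised, so `d`-SOS compares
the marginals term by term.
-/

/-- `v` is a `d`-approximate submodular-over-signals (`d`-SOS) valuation:
for every coordinate `j`, every `x ≥ 0` and `δ ≥ 0`, and all vectors
`0 ≤ t' ≤ t` coordinatewise, the marginal increase of `v` in coordinate `j`
from `x` to `x + δ` at the lower profile `t'`, multiplied by `d`, dominates
the corresponding marginal increase at the higher profile `t`. -/
def dSOS {n : ℕ} (d : ℝ) (v : (Fin n → ℝ) → ℝ) : Prop :=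
  ∀ (j : Fin n) (x δ : ℝ), 0 ≤ x → 0 ≤ δ →
    ∀ t t' : Fin n → ℝ, (∀ l, 0 ≤ t' l) → (∀ l, t' l ≤ t l) →
      d * (v (Function.update t' j (x + δ)) - v (Function.update t' j x)) ≥
        v (Function.update t j (x + δ)) - v (Function.update t j x)

open Finset Function

namespace dSOS

variable {n : ℕ} {d : ℝ} {v : (Fin n → ℝ) → ℝ}

theorem piecewise_sub_le (hv : dSOS d v) {x y : Fin n → ℝ} (hx : 0 ≤ x) (hy : 0 ≤ y)
    (T : Finset (Fin n)) {t t' : Fin n → ℝ} (ht' : 0 ≤ t') (hle : t' ≤ t) :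
    v (T.piecewise (x + y) t) - v (T.piecewise x t) ≤
      d * (v (T.piecewise (x + y) t') - v (T.piecewise x t')) := by
  induction T using Finset.induction_on generalizing t t' with
  | empty => simp
  | insert a T ha ih =>
    simp only [piecewise_insert, Pi.add_apply]
    have hcoord := hv a (x a) (y a) (hx a) (hy a) (T.piecewise (x + y) t)
      (T.piecewise (x + y) t') (le_piecewise_of_le_of_le _ (add_nonneg hx hy) ht')
      (piecewise_le_piecewise _ le_rfl hle)
    -- coordinate `a` is frozen at `x a` while the coordinates of `T` are raised
    have hrest := ih (t := update t a (x a)) (t' := update t' a (x a))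
      (le_update_iff.2 ⟨hx a, fun j _ => ht' j⟩)
      (update_le_update_iff.2 ⟨le_rfl, fun j _ => hle j⟩)
    simp only [← update_piecewise_of_notMem _ _ _ ha] at hrest
    linarith

end dSOS

theorem sm_sets_general {n : ℕ} (d : ℝ) (v : (Fin n → ℝ) → ℝ)
    (hv : dSOS d v) (A : Finset (Fin n)) (s y s' : Fin n → ℝ)
    (hs : ∀ j, 0 ≤ s j) (hy : ∀ j, 0 ≤ y j)
    (hs' : ∀ j ∉ A, s j ≤ s' j) :
    d * (v (fun j => if j ∈ A then s j + y j else s j) - v s) ≥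
      v (fun j => if j ∈ A then s j + y j else s' j)
        - v (fun j => if j ∈ A then s j else s' j) := by
  have hle : s ≤ A.piecewise s s' :=
    (A.piecewise_same s).symm.trans_le (A.piecewise_le_piecewise' (fun _ _ => le_rfl) hs')
  have key := hv.piecewise_sub_le hs hy A hs hle
  rw [piecewise_idem_right, piecewise_idem_right, piecewise_same] at key
  exact key

/-- Lemma 2.8 (sm-sets): for a `d`-SOS valuation `v`, an arbitrary set `A` of
coordinates (with complement `B`), nonnegative vectors `s, y`, and a vector `s'`
dominating `s` on `B`, we have
`d·(v(s_A + y_A, s_B) − v(s_A, s_B)) ≥ v(s_A + y_A, s'_B) − v(s_A, s'_B)`. -/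
theorem sm_sets {n : ℕ} (d : ℝ) (hd : 1 ≤ d) (v : (Fin n → ℝ) → ℝ)
    (hv : dSOS d v) (A : Finset (Fin n)) (s y s' : Fin n → ℝ)
    (hs : ∀ j, 0 ≤ s j) (hy : ∀ j, 0 ≤ y j)
    (hs' : ∀ j ∉ A, s j ≤ s' j) :
    d * (v (fun j => if j ∈ A then s j + y j else s j) - v s) ≥
      v (fun j => if j ∈ A then s j + y j else s' j)
        - v (fun j => if j ∈ A then s j else s' j) :=
  sm_sets_general d v hv A s y s' hs hy hs'
end

section
/- Let n ≥ 1, let d ≥ 1, and let v : (Fin n → ℝ) → ℝ be d-SOS and nonnegative on nonnegative vectors. Fix i ∈ Fin n and a nonnegative vector s : Fin n → ℝ. Then (1/2^{n−1}) · Σ_{A ⊆ Fin n \ {i}} v( s|_{A ∪ {i}} ) ≥ v(s)/(d+1), where the sum ranges over all subsets A of Fin n \ {i}. (Equivalently: if A is a uniformly random subset of Fin n \ {i} and B its complement in Fin n \ {i}, then E_A[ v(s_A, 0_B, s_i) ] ≥ v(s)/(d+1).) -/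
open Finset

theorem Finset.sum_powerset_sdiff {α M : Type*} [DecidableEq α] [AddCommMonoid M]
    (T : Finset α) (f : Finset α → M) :
    ∑ A ∈ T.powerset, f (T \ A) = ∑ A ∈ T.powerset, f A :=
  sum_nbij' (T \ ·) (T \ ·) (by simp) (by simp)
    (fun _ hA ↦ sdiff_sdiff_eq_self (mem_powerset.1 hA))
    (fun _ hA ↦ sdiff_sdiff_eq_self (mem_powerset.1 hA)) (fun _ _ ↦ rfl)

section Piecewise

variable {ι M : Type*} [Preorder M] [Zero M] {s : ι → M}

theorem Finset.piecewise_zero_nonneg (hs : 0 ≤ s) (C : Finset ι) [∀ j, Decidable (j ∈ C)] :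
    0 ≤ C.piecewise s 0 :=
  fun l ↦ piecewise_cases C s 0 (0 ≤ ·) (hs l) le_rfl

theorem Finset.piecewise_zero_le_of_subset [DecidableEq ι] (hs : 0 ≤ s) {C C' : Finset ι}
    (hC' : C' ⊆ C) : C'.piecewise s 0 ≤ C.piecewise s 0 := by
  intro l
  by_cases hl : l ∈ C'
  · rw [piecewise_eq_of_mem _ _ _ hl, piecewise_eq_of_mem _ _ _ (hC' hl)]
  · rw [piecewise_eq_of_notMem _ _ _ hl]
    exact piecewise_zero_nonneg hs C l

end Piecewise

namespace dSOS

variable {n : ℕ} {d : ℝ} {v : (Fin n → ℝ) → ℝ} {s : Fin n → ℝ}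

theorem marginal_insert_le (hv : dSOS d v) (hs : 0 ≤ s) {C C' : Finset (Fin n)}
    (hC' : C' ⊆ C) {j : Fin n} (hj : j ∉ C) :
    v ((insert j C).piecewise s 0) - v (C.piecewise s 0) ≤
      d * (v ((insert j C').piecewise s 0) - v (C'.piecewise s 0)) := by
  have hzero {E : Finset (Fin n)} (hjE : j ∉ E) :
      Function.update (E.piecewise s 0) j 0 = E.piecewise s 0 :=
    Function.update_eq_self_iff.2 (piecewise_eq_of_notMem E s 0 hjE).symm
  have key := hv j 0 (s j) le_rfl (hs j) (C.piecewise s 0) (C'.piecewise s 0)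
    (piecewise_zero_nonneg hs C') (piecewise_zero_le_of_subset hs hC')
  rwa [zero_add, hzero hj, hzero (fun h ↦ hj (hC' h)), ← piecewise_insert,
    ← piecewise_insert] at key

theorem marginal_union_le (hv : dSOS d v) (hs : 0 ≤ s) {C C' : Finset (Fin n)}
    (hC' : C' ⊆ C) {D : Finset (Fin n)} (hD : Disjoint D C) :
    v ((C ∪ D).piecewise s 0) - v (C.piecewise s 0) ≤
      d * (v ((C' ∪ D).piecewise s 0) - v (C'.piecewise s 0)) := by
  induction D using Finset.induction_on with
  | empty => rw [union_empty, union_empty, sub_self, sub_self, mul_zero]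
  | @insert j D hjD ih =>
    rw [disjoint_insert_left] at hD
    have hstep := marginal_insert_le hv hs (union_subset_union hC' (subset_refl D))
      (C := C ∪ D) (j := j) (by simp [hD.1, hjD])
    rw [union_insert, union_insert]
    linarith [ih hD.2]

theorem le_add_mul_of_subset_compl (hv : dSOS d v) (hd : 0 ≤ d)
    (hpos : ∀ t : Fin n → ℝ, (∀ l, 0 ≤ t l) → 0 ≤ v t) (hs : 0 ≤ s)
    {i : Fin n} {A : Finset (Fin n)} (hA : A ⊆ {i}ᶜ) :
    v s ≤ v ((insert i A).piecewise s 0) + d * v ((insert i ({i}ᶜ \ A)).piecewise s 0) := by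
  have hmarg := marginal_union_le hv hs (C := insert i A) (C' := {i}) (D := {i}ᶜ \ A)
    (by simp) (disjoint_insert_right.2 ⟨by simp, sdiff_disjoint⟩)
  have huniv : insert i A ∪ ({i}ᶜ \ A) = univ := by
    rw [insert_union, union_sdiff_of_subset hA, insert_compl_self]
  rw [huniv, piecewise_univ, ← insert_eq] at hmarg
  linarith [mul_nonneg hd (hpos _ (piecewise_zero_nonneg hs {i} ·))]

end dSOS

theorem key_lemma_general {n : ℕ} (d : ℝ) (hd : 1 ≤ d)
    (v : (Fin n → ℝ) → ℝ) (hv : dSOS d v)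
    (hpos : ∀ t : Fin n → ℝ, (∀ l, 0 ≤ t l) → 0 ≤ v t)
    (i : Fin n) (s : Fin n → ℝ) (hs : ∀ l, 0 ≤ s l) :
    (1 / 2 ^ (n - 1) : ℝ) *
        ∑ A ∈ (({i} : Finset (Fin n))ᶜ).powerset,
          v (fun j => if j ∈ insert i A then s j else 0)
      ≥ v s / (d + 1) := by
  set S := ∑ A ∈ (({i} : Finset (Fin n))ᶜ).powerset, v ((insert i A).piecewise s 0)
  have hcard : (#(({i} : Finset (Fin n))ᶜ.powerset) : ℝ) = 2 ^ (n - 1) := by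
    simp [card_powerset, card_compl]
  have hsum : 2 ^ (n - 1) * v s ≤ (1 + d) * S := calc
    2 ^ (n - 1) * v s = ∑ _A ∈ (({i} : Finset (Fin n))ᶜ).powerset, v s := by
      rw [sum_const, nsmul_eq_mul, hcard]
    _ ≤ ∑ A ∈ (({i} : Finset (Fin n))ᶜ).powerset,
          (v ((insert i A).piecewise s 0) + d * v ((insert i ({i}ᶜ \ A)).piecewise s 0)) :=
      sum_le_sum fun A hA ↦
        dSOS.le_add_mul_of_subset_compl hv (by linarith) hpos hs (mem_powerset.1 hA)
    _ = (1 + d) * S := by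
      rw [sum_add_distrib, ← mul_sum,
        sum_powerset_sdiff (f := fun B ↦ v ((insert i B).piecewise s 0))]
      ring
  change v s / (d + 1) ≤ 1 / 2 ^ (n - 1) * S
  rw [one_div, inv_mul_eq_div, div_le_div_iff₀ (by linarith) (by positivity)]
  linarith

/-- Key Lemma (Lemma 3.1): for a nonnegative `d`-SOS valuation `v`, an agent `i`
and a nonnegative signal vector `s`, averaging the value of `s` restricted to
`A ∪ {i}` (zeroing the other coordinates) over all subsets `A` of `[n] \ {i}`
yields at least a `1/(d+1)` fraction of `v s`. -/
theorem key_lemma {n : ℕ} (hn : 1 ≤ n) (d : ℝ) (hd : 1 ≤ d)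
    (v : (Fin n → ℝ) → ℝ) (hv : dSOS d v)
    (hpos : ∀ t : Fin n → ℝ, (∀ l, 0 ≤ t l) → 0 ≤ v t)
    (i : Fin n) (s : Fin n → ℝ) (hs : ∀ l, 0 ≤ s l) :
    (1 / 2 ^ (n - 1) : ℝ) *
        ∑ A ∈ (({i} : Finset (Fin n))ᶜ).powerset,
          v (fun j => if j ∈ insert i A then s j else 0)
      ≥ v s / (d + 1) :=
  key_lemma_general d hd v hv hpos i s hs
end

section
/- Let n ≥ 1, let d ≥ 1, and let v : (Fin n → ℝ) → ℝ be d-SOS and nonnegative on nonnegative vectors. Fix i ∈ Fin n and a nonnegative vector s : Fin n → ℝ. Then for every subset S ⊆ Fin n \ {i}, with T = (Fin n \ {i}) \ S, one has v( s|_{S ∪ {i}} ) + v( s|_{T ∪ {i}} ) ≥ (2/(d+1)) · v(s). -/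
private lemma update_restrict_insert {n : ℕ} (s : Fin n → ℝ) (C : Finset (Fin n)) (j : Fin n) :
    Function.update (fun l => if l ∈ C then s l else 0) j (s j)
      = fun l => if l ∈ insert j C then s l else 0 := by
  funext l
  by_cases h : l = j
  · subst h; simp
  · simp [Function.update_of_ne h, Finset.mem_insert, h]

private lemma update_restrict_zero {n : ℕ} (s : Fin n → ℝ) (C : Finset (Fin n)) (j : Fin n)
    (hj : j ∉ C) :
    Function.update (fun l => if l ∈ C then s l else 0) j 0
      = fun l => if l ∈ C then s l else 0 := by
  funext l
  by_cases h : l = j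
  · subst h; simp [hj]
  · simp [Function.update_of_ne h]

private lemma telescope {n : ℕ} (d : ℝ) (v : (Fin n → ℝ) → ℝ) (hv : dSOS d v)
    (s : Fin n → ℝ) (hs : ∀ l, 0 ≤ s l) :
    ∀ (U P Q : Finset (Fin n)), P ⊆ Q → Disjoint U Q →
      d * (v (fun j => if j ∈ P ∪ U then s j else 0) - v (fun j => if j ∈ P then s j else 0)) ≥
        v (fun j => if j ∈ Q ∪ U then s j else 0) - v (fun j => if j ∈ Q then s j else 0) := by
  intro U
  induction U using Finset.induction_on with
  | empty => intro P Q _ _; simp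
  | @insert j U' hj ih =>
    intro P Q hPQ hdisj
    have hjQ : j ∉ Q := fun h => (Finset.disjoint_left.mp hdisj (Finset.mem_insert_self j U')) h
    have hdisj' : Disjoint U' Q :=
      Finset.disjoint_left.mpr fun {a} ha => Finset.disjoint_left.mp hdisj (Finset.mem_insert_of_mem ha)
    have hjPU : j ∉ P ∪ U' := by
      simp only [Finset.mem_union, not_or]
      exact ⟨fun h => hjQ (hPQ h), hj⟩
    have hjQU : j ∉ Q ∪ U' := by
      simp only [Finset.mem_union, not_or]
      exact ⟨hjQ, hj⟩
    have h1 := ih P Q hPQ hdisj'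
    have h2 := hv j 0 (s j) le_rfl (hs j)
      (fun l => if l ∈ Q ∪ U' then s l else 0)
      (fun l => if l ∈ P ∪ U' then s l else 0)
      (fun l => by split <;> [exact hs l; exact le_rfl])
      (fun l => by
        by_cases h : l ∈ P ∪ U'
        · have : l ∈ Q ∪ U' := by
            rcases Finset.mem_union.mp h with h' | h'
            · exact Finset.mem_union_left _ (hPQ h')
            · exact Finset.mem_union_right _ h'
          simp [h, this]
        · rw [if_neg h]
          split <;> [exact hs l; exact le_rfl])
    rw [zero_add, update_restrict_insert, update_restrict_insert,
        update_restrict_zero s _ j hjQU, update_restrict_zero s _ j hjPU] at h2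
    have e1 : P ∪ insert j U' = insert j (P ∪ U') := Finset.union_insert j P U'
    have e2 : Q ∪ insert j U' = insert j (Q ∪ U') := Finset.union_insert j Q U'
    rw [e1, e2]
    linarith

/-- Core step of the Key Lemma (Lemma 3.1): for a nonnegative `d`-SOS valuation
`v`, an agent `i`, a nonnegative signal vector `s`, and any partition `(S, T)`
of the agents other than `i`, the values of `s` restricted to `S ∪ {i}` and to
`T ∪ {i}` (zeroing the remaining coordinates) sum to at least a `2/(d+1)`
fraction of `v s`. -/
theorem key_lemma_pairwise {n : ℕ} (hn : 1 ≤ n) (d : ℝ) (hd : 1 ≤ d)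
    (v : (Fin n → ℝ) → ℝ) (hv : dSOS d v)
    (hpos : ∀ t : Fin n → ℝ, (∀ l, 0 ≤ t l) → 0 ≤ v t)
    (i : Fin n) (s : Fin n → ℝ) (hs : ∀ l, 0 ≤ s l)
    (S : Finset (Fin n)) (hS : S ⊆ ({i} : Finset (Fin n))ᶜ) :
    v (fun j => if j ∈ insert i S then s j else 0) +
        v (fun j => if j ∈ insert i ((({i} : Finset (Fin n))ᶜ) \ S) then s j else 0)
      ≥ (2 / (d + 1)) * v s := by
  set T : Finset (Fin n) := (({i} : Finset (Fin n))ᶜ) \ S with hT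
  have hsub1 : ({i} : Finset (Fin n)) ⊆ insert i S := by
    intro a ha
    rw [Finset.mem_singleton] at ha
    exact ha ▸ Finset.mem_insert_self i S
  have hsub2 : ({i} : Finset (Fin n)) ⊆ insert i T := by
    intro a ha
    rw [Finset.mem_singleton] at ha
    exact ha ▸ Finset.mem_insert_self i T
  have hdisj1 : Disjoint T (insert i S) := by
    rw [Finset.disjoint_left]
    intro a ha
    have h1 : a ≠ i := by
      have := (Finset.mem_sdiff.mp ha).1
      simpa [Finset.mem_compl] using this
    have h2 : a ∉ S := (Finset.mem_sdiff.mp ha).2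
    simp [Finset.mem_insert, h1, h2]
  have hdisj2 : Disjoint S (insert i T) := by
    rw [Finset.disjoint_left]
    intro a ha
    have h1 : a ≠ i := by
      have := hS ha
      simpa [Finset.mem_compl] using this
    have h2 : a ∉ T := by simp [hT, Finset.mem_sdiff, ha]
    simp [Finset.mem_insert, h1, h2]
  have huniv1 : insert i S ∪ T = Finset.univ := by
    ext a
    simp only [Finset.mem_union, Finset.mem_insert, Finset.mem_sdiff, Finset.mem_compl,
      Finset.mem_singleton, Finset.mem_univ, iff_true, hT]
    tauto
  have huniv2 : insert i T ∪ S = Finset.univ := by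
    ext a
    simp only [Finset.mem_union, Finset.mem_insert, Finset.mem_sdiff, Finset.mem_compl,
      Finset.mem_singleton, Finset.mem_univ, iff_true, hT]
    tauto
  have hiT : ({i} : Finset (Fin n)) ∪ T = insert i T := by
    ext a; simp [Finset.mem_insert, or_comm]
  have hiS : ({i} : Finset (Fin n)) ∪ S = insert i S := by
    ext a; simp [Finset.mem_insert, or_comm]
  have hu : (fun j => if j ∈ (Finset.univ : Finset (Fin n)) then s j else 0) = s := by
    funext l; simp
  have h1 := telescope d v hv s hs T {i} (insert i S) hsub1 hdisj1
  have h2 := telescope d v hv s hs S {i} (insert i T) hsub2 hdisj2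
  rw [hiT, huniv1, hu] at h1
  rw [hiS, huniv2, hu] at h2
  have h0 : 0 ≤ v (fun j => if j ∈ ({i} : Finset (Fin n)) then s j else 0) :=
    hpos _ (fun l => by by_cases h : l ∈ ({i} : Finset (Fin n)) <;> simp [h, hs l])
  have hd1 : (0:ℝ) < d + 1 := by linarith
  rw [ge_iff_le, div_mul_eq_mul_div, div_le_iff₀ hd1]
  nlinarith [mul_nonneg (by linarith : (0:ℝ) ≤ d) h0]
end

section
/- Let n ≥ 1, d ≥ 1, and let I be a family of subsets of Fin n that is downward closed (S ∈ I and S' ⊆ S imply S' ∈ I) with ∅ ∈ I. Let s : Fin n → ℝ be nonnegative, and for each i let v_i : (Fin n → ℝ) → ℝ be d-SOS, nonnegative on nonnegative vectors, and weakly increasing in each coordinate. For B ⊆ Fin n and i ∈ B, set w_i(B) := v_i( s|_{Bᶜ ∪ {i}} ). Suppose σ assigns to each B ⊆ Fin n a set σ(B) ∈ I with σ(B) ⊆ B that maximizes Σ_{i∈S} w_i(B) over all S ∈ I with S ⊆ B. Then (1/2ⁿ) · Σ_{B ⊆ Fin n} Σ_{i ∈ σ(B)} v_i(s) ≥ (1/(2(d+1)))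 · max_{S ∈ I} Σ_{i∈S} v_i(s). In particular, the Random Sampling Vickrey mechanism gives a 2(d+1)-approximation (a 4-approximation for SOS, i.e. d = 1) to the optimal welfare in any single-parameter downward-closed setting. -/
namespace RSVaux

def restr {n : ℕ} (s : Fin n → ℝ) (C : Finset (Fin n)) : Fin n → ℝ :=
  fun l => if l ∈ C then s l else 0

variable {n : ℕ} {s : Fin n → ℝ}

lemma restr_nonneg (hs : ∀ l, 0 ≤ s l) (C : Finset (Fin n)) : ∀ l, 0 ≤ restr s C l := by
  intro l; unfold restr; split
  · exact hs l
  · exact le_refl 0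

lemma restr_mono (hs : ∀ l, 0 ≤ s l) {C D : Finset (Fin n)} (h : C ⊆ D) :
    ∀ l, restr s C l ≤ restr s D l := by
  intro l; unfold restr
  by_cases hl : l ∈ C
  · simp [hl, h hl]
  · simp only [hl, if_neg, if_false]
    split
    · exact hs l
    · exact le_refl 0

lemma restr_le (hs : ∀ l, 0 ≤ s l) (C : Finset (Fin n)) : ∀ l, restr s C l ≤ s l := by
  intro l; unfold restr; split
  · exact le_refl _
  · exact hs l

lemma update_restr_self (s : Fin n → ℝ) (A : Finset (Fin n)) (j : Fin n) :
    Function.update (restr s A) j (s j) = restr s (insert j A) := by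
  funext l
  by_cases h : l = j
  · subst h; simp [restr, Function.update_self]
  · simp [Function.update_of_ne h, restr, Finset.mem_insert, h]

lemma update_restr_zero {A : Finset (Fin n)} {j : Fin n} (hj : j ∉ A) :
    Function.update (restr s A) j 0 = restr s A := by
  funext l
  by_cases h : l = j
  · subst h; simp [restr, hj]
  · simp [Function.update_of_ne h]

lemma teleSOS {d : ℝ} (hd : 1 ≤ d) {v : (Fin n → ℝ) → ℝ} (hv : dSOS d v)
    (hs : ∀ l, 0 ≤ s l) :
    ∀ F C G : Finset (Fin n), G ⊆ C → (∀ j ∈ F, j ∉ C) →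
      v (restr s (C ∪ F)) - v (restr s C) ≤ d * (v (restr s (G ∪ F)) - v (restr s G)) := by
  intro F
  induction F using Finset.induction_on with
  | empty => intro C G hGC _; simp
  | @insert j F' hj ih =>
    intro C G hGC hF
    have hjC : j ∉ C := hF j (Finset.mem_insert_self _ _)
    have hjF' : j ∉ C ∪ F' := by
      simp only [Finset.mem_union, not_or]; exact ⟨hjC, hj⟩
    have hjG' : j ∉ G ∪ F' := by
      simp only [Finset.mem_union, not_or]; exact ⟨fun h => hjC (hGC h), hj⟩
    have hsos := hv j 0 (s j) le_rfl (hs j) (restr s (C ∪ F')) (restr s (G ∪ F'))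
      (restr_nonneg hs _)
      (restr_mono hs (Finset.union_subset_union hGC (Finset.Subset.refl _)))
    rw [zero_add, update_restr_self, update_restr_self, update_restr_zero hjF',
      update_restr_zero hjG'] at hsos
    have ihh := ih C G hGC (fun k hk => hF k (Finset.mem_insert_of_mem hk))
    have e1 : C ∪ insert j F' = insert j (C ∪ F') := by
      rw [Finset.union_insert]
    have e2 : G ∪ insert j F' = insert j (G ∪ F') := by
      rw [Finset.union_insert]
    rw [e1, e2]
    linarith


lemma compl_sdiff_erase (i : Fin n) (B' : Finset (Fin n)) :
    ((Finset.univ.erase i) \ B')ᶜ = insert i B' := by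
  ext l
  simp only [Finset.mem_compl, Finset.mem_sdiff, Finset.mem_erase, Finset.mem_insert,
    Finset.mem_univ, and_true, not_and, not_not]
  constructor
  · intro h
    by_cases hl : l = i
    · exact Or.inl hl
    · exact Or.inr (h hl)
  · intro h hne
    rcases h with h | h
    · exact absurd h hne
    · exact h

lemma avg (hn : 1 ≤ n) {d : ℝ} (hd : 1 ≤ d) {v : (Fin n → ℝ) → ℝ} (hv : dSOS d v)
    (hpos : ∀ t : Fin n → ℝ, (∀ l, 0 ≤ t l) → 0 ≤ v t) (hs : ∀ l, 0 ≤ s l) (i : Fin n) :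
    (2 : ℝ) ^ (n - 1) * v s
      ≤ (d + 1) * ∑ B' ∈ (Finset.univ.erase i).powerset, v (restr s B'ᶜ) := by
  set E : Finset (Fin n) := Finset.univ.erase i with hE
  -- key pointwise inequality
  have key : ∀ B' ∈ E.powerset,
      v s ≤ v (restr s (insert i B')) + d * v (restr s B'ᶜ) := by
    intro B' hB'
    rw [Finset.mem_powerset] at hB'
    have hiB' : i ∉ B' := fun h => (Finset.notMem_erase i _) (hB' h)
    have hGC : ({i} : Finset (Fin n)) ⊆ insert i B' := by
      simp
    have hF : ∀ j ∈ (insert i B')ᶜ, j ∉ insert i B' := fun j hj => Finset.mem_compl.mp hj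
    have h1 := teleSOS hd hv hs ((insert i B')ᶜ) (insert i B') {i} hGC hF
    have e1 : insert i B' ∪ (insert i B')ᶜ = Finset.univ := Finset.union_compl _
    have e2 : ({i} : Finset (Fin n)) ∪ (insert i B')ᶜ = B'ᶜ := by
      ext l
      simp only [Finset.mem_union, Finset.mem_singleton, Finset.mem_compl, Finset.mem_insert,
        not_or]
      constructor
      · rintro (rfl | ⟨_, h⟩)
        · exact hiB'
        · exact h
      · intro h
        by_cases hl : l = i
        · exact Or.inl hl
        · exact Or.inr ⟨hl, h⟩
    have e3 : restr s Finset.univ = s := by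
      funext l; simp [restr]
    rw [e1, e2, e3] at h1
    have h2 : 0 ≤ v (restr s ({i} : Finset (Fin n))) := hpos _ (restr_nonneg hs _)
    have h3 : 0 ≤ d := le_trans zero_le_one hd
    nlinarith [mul_nonneg h3 h2]
  -- sum the key inequality
  have hsum : ∑ B' ∈ E.powerset, v s
      ≤ ∑ B' ∈ E.powerset, (v (restr s (insert i B')) + d * v (restr s B'ᶜ)) :=
    Finset.sum_le_sum key
  -- the involution
  have hinv : ∑ B' ∈ E.powerset, v (restr s (insert i B'))
      = ∑ B' ∈ E.powerset, v (restr s B'ᶜ) := by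
    refine Finset.sum_nbij' (fun B' => E \ B') (fun B' => E \ B') ?_ ?_ ?_ ?_ ?_
    · intro a _; exact Finset.mem_powerset.mpr (Finset.sdiff_subset)
    · intro a _; exact Finset.mem_powerset.mpr (Finset.sdiff_subset)
    · intro a ha
      exact Finset.sdiff_sdiff_eq_self (Finset.mem_powerset.mp ha)
    · intro a ha
      exact Finset.sdiff_sdiff_eq_self (Finset.mem_powerset.mp ha)
    · intro a _
      rw [compl_sdiff_erase]
  -- cardinality
  have hcard : E.powerset.card = 2 ^ (n - 1) := by
    rw [Finset.card_powerset, hE, Finset.card_erase_of_mem (Finset.mem_univ i),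
      Finset.card_univ, Fintype.card_fin]
  have hconst : ∑ _B' ∈ E.powerset, v s = (2 : ℝ) ^ (n - 1) * v s := by
    rw [Finset.sum_const, hcard, nsmul_eq_mul]
    push_cast
    ring
  rw [hconst, Finset.sum_add_distrib, hinv, ← Finset.mul_sum] at hsum
  linarith [hsum]
end RSVaux

open RSVaux

/-- Theorem 4.1 (thm:single-param-dc), approximation guarantee of the
Random Sampling Vickrey mechanism for single-parameter downward-closed
settings with `d`-SOS valuations.  Here `I` is the downward-closed feasibility
family, `σ B` is a feasible subset of the potential-winner set `B` maximizing
the total proxy value `w i B = v i (s restricted to Bᶜ ∪ {i})`; averaging the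
true welfare of the served set over a uniformly random `B ⊆ [n]` recovers at
least a `1/(2(d+1))` fraction of the optimal welfare. -/
theorem rs_vickrey_downward_closed {n : ℕ} (hn : 1 ≤ n) (d : ℝ) (hd : 1 ≤ d)
    (I : Finset (Finset (Fin n)))
    (hdc : ∀ S ∈ I, ∀ S' ⊆ S, S' ∈ I) (hIempty : ∅ ∈ I)
    (s : Fin n → ℝ) (hs : ∀ l, 0 ≤ s l)
    (v : Fin n → (Fin n → ℝ) → ℝ)
    (hsos : ∀ i, dSOS d (v i))
    (hpos : ∀ i (t : Fin n → ℝ), (∀ l, 0 ≤ t l) → 0 ≤ v i t)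
    (hmono : ∀ i (t t' : Fin n → ℝ), (∀ l, t l ≤ t' l) → v i t ≤ v i t')
    (σ : Finset (Fin n) → Finset (Fin n))
    (hσI : ∀ B, σ B ∈ I) (hσB : ∀ B, σ B ⊆ B)
    (hσmax : ∀ B, ∀ S ∈ I, S ⊆ B →
      ∑ i ∈ S, v i (fun l => if l = i ∨ l ∉ B then s l else 0)
        ≤ ∑ i ∈ σ B, v i (fun l => if l = i ∨ l ∉ B then s l else 0)) :
    (1 / 2 ^ n : ℝ) *
        ∑ B ∈ (Finset.univ : Finset (Fin n)).powerset, ∑ i ∈ σ B, v i s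
      ≥ (1 / (2 * (d + 1))) * I.sup' ⟨∅, hIempty⟩ (fun S => ∑ i ∈ S, v i s) := by
  classical
  obtain ⟨S, hSI, hSopt⟩ :=
    Finset.exists_mem_eq_sup' (⟨∅, hIempty⟩ : I.Nonempty) (fun S => ∑ i ∈ S, v i s)
  rw [hSopt]
  have hd1 : (0 : ℝ) < d + 1 := by linarith
  set w : Fin n → Finset (Fin n) → ℝ :=
    fun i B => v i (fun l => if l = i ∨ l ∉ B then s l else 0) with hw
  -- step 1: w i B ≤ v i s
  have h1 : ∀ B, ∑ i ∈ σ B, w i B ≤ ∑ i ∈ σ B, v i s := by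
    intro B
    refine Finset.sum_le_sum fun i _ => hmono i _ _ fun l => ?_
    split
    · exact le_refl _
    · exact hs l
  -- step 2: σ beats S ∩ B
  have h2 : ∀ B, ∑ i ∈ S ∩ B, w i B ≤ ∑ i ∈ σ B, w i B := by
    intro B
    exact hσmax B (S ∩ B) (hdc S hSI _ Finset.inter_subset_left) Finset.inter_subset_right
  -- step 3: avg per i, with w rewritten
  have h3 : ∀ i ∈ S, (2 : ℝ) ^ (n - 1) / (d + 1) * v i s
      ≤ ∑ B' ∈ (Finset.univ.erase i).powerset, w i (insert i B') := by
    intro i _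
    have havg := avg hn hd (hsos i) (hpos i) hs i
    have heq : ∀ B' ∈ (Finset.univ.erase i).powerset,
        v i (restr s B'ᶜ) = w i (insert i B') := by
      intro B' hB'
      have hiB' : i ∉ B' := fun h =>
        (Finset.notMem_erase i _) ((Finset.mem_powerset.mp hB') h)
      rw [hw]
      congr 1
      funext l
      simp only [restr, Finset.mem_compl, Finset.mem_insert, not_or]
      by_cases hl : l = i
      · subst hl
        simp [hiB']
      · simp [hl]
    rw [Finset.sum_congr rfl heq] at havg
    rw [div_mul_eq_mul_div, div_le_iff₀ hd1, mul_comm _ (d + 1)]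
    exact havg
  -- step 4: unfold the double sum over B ∋ i
  have h4 : ∀ i, ∑ B ∈ (Finset.univ : Finset (Fin n)).powerset,
        (if i ∈ B then w i B else 0)
      = ∑ B' ∈ (Finset.univ.erase i).powerset, w i (insert i B') := by
    intro i
    conv_lhs => rw [show (Finset.univ : Finset (Fin n)) = insert i (Finset.univ.erase i) from
      (Finset.insert_erase (Finset.mem_univ i)).symm]
    rw [Finset.sum_powerset_insert (Finset.notMem_erase i _)]
    rw [Finset.sum_eq_zero fun B' hB' => by
      have : i ∉ B' := fun h =>
        (Finset.notMem_erase i _) ((Finset.mem_powerset.mp hB') h)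
      simp [this]]
    rw [zero_add]
    exact Finset.sum_congr rfl fun B' _ => by simp
  -- main chain
  have main : ∑ i ∈ S, ((2 : ℝ) ^ (n - 1) / (d + 1) * v i s)
      ≤ ∑ B ∈ (Finset.univ : Finset (Fin n)).powerset, ∑ i ∈ σ B, v i s := by
    calc ∑ i ∈ S, ((2 : ℝ) ^ (n - 1) / (d + 1) * v i s)
        ≤ ∑ i ∈ S, ∑ B' ∈ (Finset.univ.erase i).powerset, w i (insert i B') :=
          Finset.sum_le_sum h3
      _ = ∑ i ∈ S, ∑ B ∈ (Finset.univ : Finset (Fin n)).powerset,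
            (if i ∈ B then w i B else 0) := by
          exact Finset.sum_congr rfl fun i _ => (h4 i).symm
      _ = ∑ B ∈ (Finset.univ : Finset (Fin n)).powerset, ∑ i ∈ S,
            (if i ∈ B then w i B else 0) := Finset.sum_comm
      _ = ∑ B ∈ (Finset.univ : Finset (Fin n)).powerset, ∑ i ∈ S ∩ B, w i B := by
          exact Finset.sum_congr rfl fun B _ => Finset.sum_ite_mem S B (fun i => w i B)
      _ ≤ ∑ B ∈ (Finset.univ : Finset (Fin n)).powerset, ∑ i ∈ σ B, w i B :=
          Finset.sum_le_sum fun B _ => h2 B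
      _ ≤ ∑ B ∈ (Finset.univ : Finset (Fin n)).powerset, ∑ i ∈ σ B, v i s :=
          Finset.sum_le_sum fun B _ => h1 B
  rw [← Finset.mul_sum] at main
  have hpow : (2 : ℝ) ^ n = 2 * 2 ^ (n - 1) := by
    rw [← pow_succ']
    congr 1
    omega
  have h2n : (0 : ℝ) < 2 ^ n := by positivity
  rw [ge_iff_le, ← sub_nonneg]
  have hconst : (1 / 2 ^ n : ℝ) * ((2 : ℝ) ^ (n - 1) / (d + 1)) = 1 / (2 * (d + 1)) := by
    rw [hpow]
    field_simp
  calc (0:ℝ) ≤ (1 / 2 ^ n : ℝ) *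
        (∑ B ∈ (Finset.univ : Finset (Fin n)).powerset, ∑ i ∈ σ B, v i s
          - (2 : ℝ) ^ (n - 1) / (d + 1) * ∑ i ∈ S, v i s) := by
        apply mul_nonneg (by positivity)
        linarith
    _ = (1 / 2 ^ n : ℝ) * ∑ B ∈ (Finset.univ : Finset (Fin n)).powerset, ∑ i ∈ σ B, v i s
          - 1 / (2 * (d + 1)) * ∑ i ∈ S, v i s := by
        rw [mul_sub, ← mul_assoc, hconst]
end

section
/- Let H > 0 and ε ≥ 0. Consider a single-item auction with two agents where only agent 1 has a signal s₁ ∈ {0,1}, with values v₁(0) = 1, v₁(1) = 1+ε, v₂(0) = 0, v₂(1) = H. Let x₁, x₂ : {0,1} → ℝ be allocation probabilities with 0 ≤ x₁(b), 0 ≤ x₂(b), x₁(b) + x₂(b) ≤ 1 for b ∈ {0,1}, and with x₁ monotone: x₁(0) ≤ x₁(1). Then min( x₁(0)·1 / 1 , (x₁(1)·(1+ε) + x₂(1)·H) / H ) ≤ 1/2 + (1+ε)/H. Consequently, as H → ∞, no ex-post IC-IR mechanism for this SOS instance achieves a better welfare approximation factor than 2. -/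
/-! Either agent 1 gets the item with probability at most `1/2` at signal `0`, or, by
monotonicity, with probability more than `1/2` at signal `1`; then agent 2, the efficient
winner there, gets it with probability less than `1/2`, and agent 1's share contributes
at most `(1 + ε) / H` to the ratio. -/

lemma min_le_half_add (a c : ℝ) (hc : 0 ≤ c) : min a (1 - a + c) ≤ 1 / 2 + c := by
  rcases le_or_gt a (1 / 2) with ha | ha
  · exact (min_le_left _ _).trans (by linarith)
  · exact (min_le_right _ _).trans (by linarith)

lemma welfare_ratio_le {H v x y : ℝ} (hH : 0 < H) (hv : 0 ≤ v) (hx : x ≤ 1) :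
    (x * v + y * H) / H ≤ y + v / H := by
  rw [div_le_iff₀ hH, add_mul, div_mul_cancel₀ _ hH.ne']
  nlinarith

theorem no_expost_better_than_two_general (H ε : ℝ) (hH : 0 < H) (hε : 0 ≤ ε)
    (x₁ x₂ : Bool → ℝ)
    (hx₂ : ∀ b, 0 ≤ x₂ b)
    (hfeas : ∀ b, x₁ b + x₂ b ≤ 1)
    (hmono : x₁ false ≤ x₁ true) :
    min (x₁ false * 1 / 1) ((x₁ true * (1 + ε) + x₂ true * H) / H)
      ≤ 1 / 2 + (1 + ε) / H := by
  have hx₁_true_le : x₁ true ≤ 1 := by linarith [hfeas true, hx₂ true]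
  have htrue : (x₁ true * (1 + ε) + x₂ true * H) / H ≤ 1 - x₁ false + (1 + ε) / H :=
    calc (x₁ true * (1 + ε) + x₂ true * H) / H
        ≤ x₂ true + (1 + ε) / H := welfare_ratio_le hH (by linarith) hx₁_true_le
      _ ≤ 1 - x₁ false + (1 + ε) / H := by linarith [hfeas true]
  calc min (x₁ false * 1 / 1) ((x₁ true * (1 + ε) + x₂ true * H) / H)
      ≤ min (x₁ false) (1 - x₁ false + (1 + ε) / H) := by
        rw [mul_one, div_one]
        exact min_le_min_left _ htrue
    _ ≤ 1 / 2 + (1 + ε) / H := min_le_half_add _ _ (by positivity)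

/-- Theorem 4.2(a) (thm:noexpost): in the single-item instance with two agents
where only agent 1 has a binary signal (`false` ↦ 0, `true` ↦ 1), values
`v₁(0) = 1`, `v₁(1) = 1 + ε`, `v₂(0) = 0`, `v₂(1) = H`, any feasible allocation
rule `(x₁, x₂)` that is monotone in agent 1's signal has its worst-case welfare
approximation factor (over the two signal profiles) bounded by
`1/2 + (1+ε)/H`.  Hence, as `H → ∞`, no ex-post IC-IR mechanism beats a
2-approximation even for SOS valuations. -/
theorem no_expost_better_than_two (H ε : ℝ) (hH : 0 < H) (hε : 0 ≤ ε)
    (x₁ x₂ : Bool → ℝ)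
    (hx₁ : ∀ b, 0 ≤ x₁ b) (hx₂ : ∀ b, 0 ≤ x₂ b)
    (hfeas : ∀ b, x₁ b + x₂ b ≤ 1)
    (hmono : x₁ false ≤ x₁ true) :
    min (x₁ false * 1 / 1) ((x₁ true * (1 + ε) + x₂ true * H) / H)
      ≤ 1 / 2 + (1 + ε) / H :=
  no_expost_better_than_two_general H ε hH hε x₁ x₂ hx₂ hfeas hmono
end

section
/- Let n ≥ 2 and ε ≥ 0. For s ∈ {0,1}ⁿ define v_i(s) = Σ_{j≠i} s_j + ε·s_i if there exists j ≠ i with s_j = 0, and v_i(s) = n² + ε·s_i otherwise. Let x : {0,1}ⁿ → (Fin n → ℝ) satisfy: x_i(s) ≥ 0 for all i, s; Σ_i x_i(s) ≤ 1 for all s; and x_i is monotone in s_i, i.e. x_i(s with i-th coordinate 0) ≤ x_i(s with i-th coordinate 1) for all s. Then there exists an agent i such that, at the profile sⁱ (which equals 1 at every coordinate except 0 at coordinate i), Σ_j x_j(sⁱ)·v_j(sⁱ) ≤ 2n − 2 + ε, while v_i(sⁱ) = n². Consequently no ex-post IC feasible allocation achieves better than an Ω(√d)-approximation for d-SOS valuations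 with d = n². -/
/-!
Since the item is allocated with total probability at most one, some agent `i` gets it with
probability at most `1/n` at the all-ones profile. Monotonicity in the own signal caps `i`'s
probability at `sⁱ` by the same `1/n`, so `i`, whose value there is `n²`, contributes at most `n`
to the welfare. Every other agent sees a zero signal at `sⁱ` and so has the small value
`n - 2 + ε`; together they contribute at most that much.
-/

open Finset

section Profiles

variable {ι : Type*} [DecidableEq ι]

/-- The profile `sⁱ` of the paper. -/
def allTrueExcept (i : ι) : ι → Bool := fun l => if l = i then false else true

theorem allTrueExcept_eq_true {i l : ι} : allTrueExcept i l = true ↔ l ≠ i := by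
  simp [allTrueExcept]

theorem update_allTrueExcept_true (i : ι) :
    Function.update (allTrueExcept i) i true = fun _ => true := by
  funext l
  by_cases h : l = i <;> simp [allTrueExcept, h]

theorem update_allTrueExcept_false (i : ι) :
    Function.update (allTrueExcept i) i false = allTrueExcept i := by
  funext l
  by_cases h : l = i <;> simp [allTrueExcept, h]

end Profiles

theorem exists_le_inv_card_of_sum_le_one {ι : Type*} [Fintype ι] [Nonempty ι] {f : ι → ℝ}
    (hf : ∑ i, f i ≤ 1) : ∃ i, f i ≤ 1 / Fintype.card ι := by
  have hsum : ∑ i, f i ≤ ∑ _i : ι, (1 / Fintype.card ι : ℝ) := by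
    rw [sum_const, card_univ, nsmul_eq_mul, mul_one_div_cancel (by positivity)]
    exact hf
  obtain ⟨i, -, hi⟩ := exists_le_of_sum_le univ_nonempty hsum
  exact ⟨i, hi⟩

theorem sum_mul_le_mul_add_of_le_off {ι : Type*} [Fintype ι] [DecidableEq ι] {x v : ι → ℝ}
    {i : ι} {c : ℝ} (hx : ∀ j, 0 ≤ x j) (hsum : ∑ j, x j ≤ 1) (hc : 0 ≤ c)
    (hv : ∀ j, j ≠ i → v j ≤ c) :
    ∑ j, x j * v j ≤ x i * v i + c := by
  have hrest : ∑ j ∈ univ.erase i, x j ≤ 1 :=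
    (sum_le_sum_of_subset_of_nonneg (erase_subset i univ) fun j _ _ => hx j).trans hsum
  rw [← add_sum_erase univ _ (mem_univ i)]
  gcongr
  calc ∑ j ∈ univ.erase i, x j * v j
      ≤ ∑ j ∈ univ.erase i, x j * c :=
        sum_le_sum fun j hj => mul_le_mul_of_nonneg_left (hv j (ne_of_mem_erase hj)) (hx j)
    _ = (∑ j ∈ univ.erase i, x j) * c := (sum_mul ..).symm
    _ ≤ 1 * c := mul_le_mul_of_nonneg_right hrest hc
    _ = c := one_mul c

noncomputable def sosValuation (n : ℕ) (ε : ℝ) (i : Fin n) (s : Fin n → Bool) : ℝ :=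
  if ∀ j, j ≠ i → s j = true then
    (n : ℝ) ^ 2 + ε * (if s i then 1 else 0)
  else
    (∑ j ∈ univ.erase i, (if s j then (1 : ℝ) else 0)) + ε * (if s i then 1 else 0)

theorem sosValuation_allTrueExcept_self (n : ℕ) (ε : ℝ) (i : Fin n) :
    sosValuation n ε i (allTrueExcept i) = (n : ℝ) ^ 2 := by
  simp [sosValuation, allTrueExcept]

theorem sosValuation_allTrueExcept_of_ne {n : ℕ} (ε : ℝ) {i j : Fin n} (hji : j ≠ i) :
    sosValuation n ε j (allTrueExcept i) = (n : ℝ) - 2 + ε := by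
  have hi : i ∈ univ.erase j := mem_erase.mpr ⟨hji.symm, mem_univ i⟩
  have hcard : #((univ.erase j).erase i) + 2 = n := by
    have hpos : 0 < #(univ.erase j) := card_pos.mpr ⟨i, hi⟩
    rw [card_erase_of_mem hi]
    rw [card_erase_of_mem (mem_univ j), card_univ, Fintype.card_fin] at hpos ⊢
    omega
  have hcount : (∑ k ∈ univ.erase j, (if allTrueExcept i k then (1 : ℝ) else 0)) = n - 2 := by
    simp only [allTrueExcept_eq_true, sum_boole, filter_ne']
    exact eq_sub_of_add_eq (by exact_mod_cast hcard)
  have hnot : ¬ ∀ k, k ≠ j → allTrueExcept i k = true :=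
    fun h => absurd (h i hji.symm) (by simp [allTrueExcept])
  rw [sosValuation, if_neg hnot, hcount, allTrueExcept_eq_true.mpr hji]
  simp

/-- Theorem 4.2(b) (thm:noexpost): for the single-item instance with `n` agents,
binary signals, and valuations `v_i(s) = Σ_{j≠i} s_j + ε·s_i` if some `j ≠ i`
has `s_j = 0`, and `v_i(s) = n² + ε·s_i` otherwise (these are `d`-SOS with
`d = n²`), every feasible allocation rule `x` that is monotone in each agent's
own signal has an agent `i` whose "all-ones-except-`i`" profile `sⁱ` witnesses
an expected welfare of at most `2n − 2 + ε`, while `v_i(sⁱ) = n²`.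
Hence no ex-post IC mechanism beats an `Ω(√d)`-approximation for `d`-SOS
valuations. -/
theorem no_expost_sqrt_d (n : ℕ) (hn : 2 ≤ n) (ε : ℝ) (hε : 0 ≤ ε)
    (v : Fin n → (Fin n → Bool) → ℝ)
    (hv : ∀ i s, v i s =
      if ∀ j, j ≠ i → s j = true then
        (n : ℝ) ^ 2 + ε * (if s i then 1 else 0)
      else
        (∑ j ∈ Finset.univ.erase i, (if s j then (1 : ℝ) else 0))
          + ε * (if s i then 1 else 0))
    (x : (Fin n → Bool) → Fin n → ℝ)
    (hnn : ∀ s i, 0 ≤ x s i)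
    (hfeas : ∀ s, ∑ i, x s i ≤ 1)
    (hmono : ∀ s i, x (Function.update s i false) i ≤ x (Function.update s i true) i) :
    ∃ i : Fin n,
      (∑ j, x (fun l => if l = i then false else true) j
          * v j (fun l => if l = i then false else true) ≤ 2 * (n : ℝ) - 2 + ε)
      ∧ v i (fun l => if l = i then false else true) = (n : ℝ) ^ 2 := by
  obtain rfl : v = sosValuation n ε := funext₂ hv
  have : Nonempty (Fin n) := ⟨⟨0, by omega⟩⟩
  obtain ⟨i, hi⟩ := exists_le_inv_card_of_sum_le_one (hfeas fun _ => true)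
  rw [Fintype.card_fin] at hi
  refine ⟨i, ?_, sosValuation_allTrueExcept_self n ε i⟩
  have hxi : x (allTrueExcept i) i ≤ 1 / n := by
    have := hmono (allTrueExcept i) i
    rw [update_allTrueExcept_true, update_allTrueExcept_false] at this
    exact this.trans hi
  have hn' : (2 : ℝ) ≤ n := by exact_mod_cast hn
  calc ∑ j, x (allTrueExcept i) j * sosValuation n ε j (allTrueExcept i)
      ≤ x (allTrueExcept i) i * (n : ℝ) ^ 2 + ((n : ℝ) - 2 + ε) := by
        rw [← sosValuation_allTrueExcept_self n ε i]
        exact sum_mul_le_mul_add_of_le_off (hnn _) (hfeas _) (by linarith)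
          fun j hj => (sosValuation_allTrueExcept_of_ne ε hj).le
    _ ≤ 1 / n * (n : ℝ) ^ 2 + ((n : ℝ) - 2 + ε) := by gcongr
    _ = 2 * (n : ℝ) - 2 + ε := by field_simp; ring
end

section
/- Let d ≥ 1 and let v : (Fin n → ℝ) → ℝ be d-SOS and nonnegative on nonnegative vectors. Then for every nonnegative vector s : Fin n → ℝ and every coordinate i, v(s) ≤ v( s with its i-th coordinate replaced by 0 ) + d · v( s(i)·e_i ), where s(i)·e_i is the vector whose i-th coordinate is s(i) and all other coordinates are 0. -/
theorem dSOS.sub_update_zero_le {n : ℕ} {d : ℝ} {v : (Fin n → ℝ) → ℝ} (hv : dSOS d v)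
    {s : Fin n → ℝ} (hs : ∀ l, 0 ≤ s l) (i : Fin n) :
    v s - v (Function.update s i 0) ≤ d * (v (Pi.single i (s i)) - v 0) := by
  have h := hv i 0 (s i) le_rfl (hs i) s 0 (fun _ => le_rfl) hs
  simp only [zero_add, Function.update_eq_self, Function.update_zero, ge_iff_le] at h
  exact h -- `Pi.single i x` unfolds to `Function.update 0 i x`

/-- The per-agent welfare decomposition inequality (Equations (2)–(3) and (8)
of the paper): a nonnegative `d`-SOS valuation satisfies
`v(s) ≤ v(s_{−i}, 0_i) + d · v(0_{−i}, s_i)`, splitting the value into an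
"OTHER" term and a "SELF" term. -/
theorem self_other_decomposition {n : ℕ} (d : ℝ) (hd : 1 ≤ d)
    (v : (Fin n → ℝ) → ℝ) (hv : dSOS d v)
    (hpos : ∀ t : Fin n → ℝ, (∀ l, 0 ≤ t l) → 0 ≤ v t)
    (s : Fin n → ℝ) (hs : ∀ l, 0 ≤ s l) (i : Fin n) :
    v s ≤ v (Function.update s i 0) + d * v (fun j => if j = i then s i else 0) := by
  have hsingle : (fun j => if j = i then s i else 0) = Pi.single i (s i) :=
    funext fun j => (Pi.single_apply i (s i) j).symm
  have hmarginal := hv.sub_update_zero_le hs i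
  have hzero : 0 ≤ d * v 0 := mul_nonneg (zero_le_one.trans hd) (hpos 0 fun _ => le_rfl)
  rw [hsingle]
  linarith
end

section
/- Let k ≥ 2. Consider n agents with signals s : Fin n → ℕ taking values in {0,1,…,k−1}, m items, and for each agent i and each subset T of the items a valuation v_{iT} : (Fin n → ℝ) → ℝ that is nonnegative on nonnegative vectors and weakly increasing in each coordinate. For ℓ ∈ {1,…,k−1}, let N_{≥ℓ} = {i : s_i ≥ ℓ} and let ŝ^ℓ : Fin n → ℝ be given by ŝ^ℓ(j) = min(s_j, ℓ). Then for every allocation T* (a function assigning each agent i a set T*_i ⊆ Fin m with the T*_i pairwise disjoint), Σ_{ℓ=1}^{k−1} [ max over allocations S of Σ_{i ∈ N_{≥ℓ}} v_{i S_i}(ŝ^ℓ) ] ≥ Σ_{i : s_i ≥ 1} v_{i T*_i}( s_i·e_i ), where the max is over allocations S of the items to the agents in N_{≥ℓ}, and s_i·e_i is the vector with value s_i at coordinate i and 0 elsewhere. Equivalently, the Random Threshold mechanism gives a (k−1)-approximation to the SELF component Σ_{i : s_i ≥ 1} v_{i T*_i}(0_{−i}, s_i) of the optimal social welfare. -/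
/-- An allocation of the `m` items to the `n` agents: each agent `i` gets a
bundle `T i ⊆ Fin m`, and the bundles of distinct agents are disjoint. -/
def IsAlloc {n m : ℕ} (T : Fin n → Finset (Fin m)) : Prop :=
  ∀ i j : Fin n, i ≠ j → Disjoint (T i) (T j)

/-- Supremum of `f` over all allocations of the `m` items to the `n` agents. -/
noncomputable def allocSup {n m : ℕ} (f : (Fin n → Finset (Fin m)) → ℝ) : ℝ :=
  ⨆ T : {T : Fin n → Finset (Fin m) // IsAlloc T}, f T.1

/-!
Group the agents of positive signal by their signal `ℓ`. At threshold `ℓ` the optimum is at least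
the welfare of `T*` itself; an agent with `s i = ℓ` has `s i • e i ≤ ŝ^ℓ` coordinatewise, so by
monotonicity its term dominates its SELF term, while the agents with larger signal contribute
nonnegative values. Summing over `ℓ` recovers the whole SELF component.
-/

open Finset

theorem le_allocSup {n m : ℕ} (f : (Fin n → Finset (Fin m)) → ℝ)
    {T : Fin n → Finset (Fin m)} (hT : IsAlloc T) : f T ≤ allocSup f :=
  le_ciSup (f := fun T : {T // IsAlloc T} => f T.1) (Set.finite_range _).bddAbove ⟨T, hT⟩

section Signals

variable {ι : Type*} [Fintype ι] [DecidableEq ι] (s : ι → ℕ)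

/-- The capped signal vector `ŝ^ℓ`. -/
def cappedSignal (ℓ : ℕ) : ι → ℝ := fun j => ((min (s j) ℓ : ℕ) : ℝ)

omit [Fintype ι] in
theorem self_le_cappedSignal {i : ι} {ℓ : ℕ} (hi : s i = ℓ) (j : ι) :
    (if j = i then (s i : ℝ) else 0) ≤ cappedSignal s ℓ j := by
  by_cases hj : j = i
  · subst hj
    simp [cappedSignal, hi]
  · simp [cappedSignal, hj]

omit [DecidableEq ι] in
theorem sum_filter_one_le_eq_sum_Icc {M : Type*} [AddCommMonoid M] {K : ℕ}
    (hs : ∀ i, s i ≤ K) (g : ι → M) :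
    ∑ i ∈ univ.filter (fun i => 1 ≤ s i), g i
      = ∑ ℓ ∈ Icc 1 K, ∑ i ∈ univ.filter (fun i => s i = ℓ), g i := by
  rw [← sum_fiberwise_of_maps_to (g := s) (t := Icc 1 K)
    (fun i hi => mem_Icc.mpr ⟨(mem_filter.mp hi).2, hs i⟩)]
  refine sum_congr rfl fun ℓ hℓ => ?_
  rw [filter_filter]
  exact sum_congr
    (filter_congr fun i _ => ⟨And.right, fun hi => ⟨hi ▸ (mem_Icc.mp hℓ).1, hi⟩⟩) fun _ _ => rfl

theorem sum_self_le_sum_cappedSignal {α : Type*} (v : ι → α → (ι → ℝ) → ℝ)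
    (hpos : ∀ i T (t : ι → ℝ), (∀ l, 0 ≤ t l) → 0 ≤ v i T t)
    (hmono : ∀ i T (t t' : ι → ℝ), (∀ l, t l ≤ t' l) → v i T t ≤ v i T t')
    (T : ι → α) (ℓ : ℕ) :
    ∑ i ∈ univ.filter (fun i => s i = ℓ), v i (T i) (fun j => if j = i then (s i : ℝ) else 0)
      ≤ ∑ i ∈ univ.filter (fun i => ℓ ≤ s i), v i (T i) (cappedSignal s ℓ) := calc
  _ ≤ ∑ i ∈ univ.filter (fun i => s i = ℓ), v i (T i) (cappedSignal s ℓ) :=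
    sum_le_sum fun i hi => hmono _ _ _ _ (self_le_cappedSignal s (mem_filter.mp hi).2)
  _ ≤ _ := by
    refine sum_le_sum_of_subset_of_nonneg (fun i => ?_) fun i _ _ => hpos _ _ _ fun l => ?_
    · simp only [mem_filter, mem_univ, true_and]
      exact Eq.ge
    · exact Nat.cast_nonneg _

end Signals

theorem random_threshold_self_cover_general (k : ℕ) (n m : ℕ)
    (s : Fin n → ℕ) (hs : ∀ i, s i ≤ k - 1)
    (v : Fin n → Finset (Fin m) → (Fin n → ℝ) → ℝ)
    (hpos : ∀ i T (t : Fin n → ℝ), (∀ l, 0 ≤ t l) → 0 ≤ v i T t)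
    (hmono : ∀ i T (t t' : Fin n → ℝ), (∀ l, t l ≤ t' l) → v i T t ≤ v i T t')
    (Tstar : Fin n → Finset (Fin m)) (hTstar : IsAlloc Tstar) :
    ∑ ℓ ∈ Finset.Icc 1 (k - 1),
        allocSup (fun S => ∑ i ∈ Finset.univ.filter (fun i => ℓ ≤ s i),
          v i (S i) (fun j => ((min (s j) ℓ : ℕ) : ℝ)))
      ≥ ∑ i ∈ Finset.univ.filter (fun i => 1 ≤ s i),
          v i (Tstar i) (fun j => if j = i then (s i : ℝ) else 0) := calc
  _ = ∑ ℓ ∈ Icc 1 (k - 1), ∑ i ∈ univ.filter (fun i => s i = ℓ),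
        v i (Tstar i) (fun j => if j = i then (s i : ℝ) else 0) :=
    sum_filter_one_le_eq_sum_Icc s hs _
  _ ≤ ∑ ℓ ∈ Icc 1 (k - 1), ∑ i ∈ univ.filter (fun i => ℓ ≤ s i),
        v i (Tstar i) (cappedSignal s ℓ) :=
    sum_le_sum fun ℓ _ => sum_self_le_sum_cappedSignal s v hpos hmono Tstar ℓ
  _ ≤ _ := sum_le_sum fun ℓ _ =>
    le_allocSup (fun S => ∑ i ∈ univ.filter (fun i => ℓ ≤ s i), v i (S i) (cappedSignal s ℓ)) hTstar

/-- Lemma 6.3 (lem:self_cover): with signals `s i ∈ {0,…,k−1}` and valuations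
`v i T` nonnegative on nonnegative vectors and weakly increasing in each
coordinate, summing over thresholds `ℓ ∈ {1,…,k−1}` the optimal proxy welfare
of the agents with signal `≥ ℓ` at the capped signal vector
`ŝ^ℓ(j) = min (s j) ℓ` dominates the SELF component
`Σ_{i : s_i ≥ 1} v_{i T*_i}(0_{−i}, s_i)` of any allocation `T*`; i.e., the
Random Threshold mechanism is a `(k−1)`-approximation to the SELF component. -/
theorem random_threshold_self_cover (k : ℕ) (hk : 2 ≤ k) (n m : ℕ)
    (s : Fin n → ℕ) (hs : ∀ i, s i ≤ k - 1)
    (v : Fin n → Finset (Fin m) → (Fin n → ℝ) → ℝ)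
    (hpos : ∀ i T (t : Fin n → ℝ), (∀ l, 0 ≤ t l) → 0 ≤ v i T t)
    (hmono : ∀ i T (t t' : Fin n → ℝ), (∀ l, t l ≤ t' l) → v i T t ≤ v i T t')
    (Tstar : Fin n → Finset (Fin m)) (hTstar : IsAlloc Tstar) :
    ∑ ℓ ∈ Finset.Icc 1 (k - 1),
        allocSup (fun S => ∑ i ∈ Finset.univ.filter (fun i => ℓ ≤ s i),
          v i (S i) (fun j => ((min (s j) ℓ : ℕ) : ℝ)))
      ≥ ∑ i ∈ Finset.univ.filter (fun i => 1 ≤ s i),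
          v i (Tstar i) (fun j => if j = i then (s i : ℝ) else 0) :=
  random_threshold_self_cover_general k n m s hs v hpos hmono Tstar hTstar
end

section
/- Consider n agents with a nonnegative signal vector s : Fin n → ℝ, m items, and for each agent i and each subset T of the items a valuation v_{iT} : (Fin n → ℝ) → ℝ that is SOS (1-SOS) and nonnegative on nonnegative vectors. Then for every allocation T* (a function assigning each agent i a set T*_i ⊆ Fin m with the T*_i pairwise disjoint), (1/2ⁿ) · Σ_{B ⊆ Fin n} [ max over allocations S of Σ_{i ∈ B} v_{i S_i}( s|_{Bᶜ} ) ] ≥ (1/4) · Σ_i v_{i T*_i}( s|_{Fin n \ {i}} ), where the max is over allocations S of the items to the agents in B, s|_{Bᶜ} is the vector equal to s outside B and 0 on B, and s|_{Fin n \ {i}} equals s except that coordinate i is replaced by 0. Equivalently, the Random Sampling mechanism gives a 4-approximation to the OTHER component Σ_i v_{iT*_i}(s_{−i}, 0_i) of the optimal social welfare. -/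
def zeroOn {n : ℕ} (s : Fin n → ℝ) (C : Finset (Fin n)) : Fin n → ℝ :=
  fun j => if j ∈ C then 0 else s j

lemma zeroOn_nonneg {n : ℕ} (s : Fin n → ℝ) (hs : ∀ l, 0 ≤ s l) (C : Finset (Fin n)) :
    ∀ l, 0 ≤ zeroOn s C l := by
  intro l; by_cases h : l ∈ C <;> simp [zeroOn, h, hs l]

lemma zeroOn_mono {n : ℕ} (s : Fin n → ℝ) (hs : ∀ l, 0 ≤ s l) {C D : Finset (Fin n)}
    (h : C ⊆ D) : ∀ l, zeroOn s D l ≤ zeroOn s C l := by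
  intro l
  by_cases h1 : l ∈ C
  · simp [zeroOn, h1, h h1]
  · by_cases h2 : l ∈ D <;> simp [zeroOn, h1, h2, hs l]

lemma update_zeroOn_zero {n : ℕ} (s : Fin n → ℝ) (X : Finset (Fin n)) (a : Fin n)
    (ha : a ∈ X) : Function.update (zeroOn s X) a 0 = zeroOn s X := by
  funext j
  by_cases h : j = a
  · subst h; simp [Function.update_apply, zeroOn, ha]
  · simp [Function.update_apply, h]

lemma update_zeroOn_val {n : ℕ} (s : Fin n → ℝ) (X : Finset (Fin n)) (a : Fin n)
    (ha : a ∉ X) : Function.update (zeroOn s (insert a X)) a (s a) = zeroOn s X := by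
  funext j
  by_cases h : j = a
  · subst h; simp [Function.update_apply, zeroOn, ha]
  · simp [Function.update_apply, zeroOn, h, Finset.mem_insert]

lemma diff_mono {n : ℕ} (s : Fin n → ℝ) (hs : ∀ l, 0 ≤ s l)
    (v : (Fin n → ℝ) → ℝ) (hv : dSOS 1 v) :
    ∀ (C E F : Finset (Fin n)), E ⊆ F → Disjoint C F →
      v (zeroOn s E) - v (zeroOn s (E ∪ C)) ≤ v (zeroOn s F) - v (zeroOn s (F ∪ C)) := by
  intro C
  induction C using Finset.induction with
  | empty => intro E F hEF _; simp
  | @insert a C' ha ih =>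
    intro E F hEF hdisj
    have hdisj' : Disjoint C' F := by
      exact Finset.disjoint_of_subset_left (Finset.subset_insert a C') hdisj
    have haF : a ∉ F := fun h => Finset.disjoint_left.mp hdisj (Finset.mem_insert_self a C') h
    have haE : a ∉ E := fun h => haF (hEF h)
    have haC' : a ∉ C' := ha
    have haEC : a ∉ E ∪ C' := by simp [haE, haC']
    have haFC : a ∉ F ∪ C' := by simp [haF, haC']
    have key := hv a 0 (s a) le_rfl (hs a)
      (zeroOn s (insert a (E ∪ C'))) (zeroOn s (insert a (F ∪ C')))
      (zeroOn_nonneg s hs _)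
      (zeroOn_mono s hs (Finset.insert_subset_insert a (Finset.union_subset_union_left hEF)))
    rw [zero_add, one_mul, update_zeroOn_val s _ a haEC, update_zeroOn_val s _ a haFC,
      update_zeroOn_zero s _ a (Finset.mem_insert_self a _),
      update_zeroOn_zero s _ a (Finset.mem_insert_self a _)] at key
    have ihEF := ih E F hEF hdisj'
    have hEu : E ∪ insert a C' = insert a (E ∪ C') := by
      ext x; simp [Finset.mem_insert, Finset.mem_union]
    have hFu : F ∪ insert a C' = insert a (F ∪ C') := by
      ext x; simp [Finset.mem_insert, Finset.mem_union]
    rw [hEu, hFu]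
    linarith

lemma pair_ge {n : ℕ} (s : Fin n → ℝ) (hs : ∀ l, 0 ≤ s l)
    (v : (Fin n → ℝ) → ℝ) (hv : dSOS 1 v)
    (hpos : ∀ t : Fin n → ℝ, (∀ l, 0 ≤ t l) → 0 ≤ v t)
    (i : Fin n) (C : Finset (Fin n)) (hC : C ⊆ Finset.univ.erase i) :
    v (Function.update s i 0) ≤
      v (zeroOn s (insert i C)) + v (zeroOn s (insert i ((Finset.univ.erase i) \ C))) := by
  classical
  set D : Finset (Fin n) := (Finset.univ.erase i) \ C with hD
  have hiC : i ∉ C := fun h => (Finset.mem_erase.mp (hC h)).1 rfl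
  have hEF : ({i} : Finset (Fin n)) ⊆ insert i D := by simp
  have hdisj : Disjoint C (insert i D) := by
    rw [Finset.disjoint_insert_right]
    exact ⟨hiC, Finset.disjoint_sdiff⟩
  have key := diff_mono s hs v hv C {i} (insert i D) hEF hdisj
  have h1 : ({i} : Finset (Fin n)) ∪ C = insert i C := by
    ext x; simp [Finset.mem_insert, Finset.mem_union]
  have h2 : insert i D ∪ C = Finset.univ := by
    ext x
    simp only [hD, Finset.mem_union, Finset.mem_insert, Finset.mem_sdiff, Finset.mem_erase,
      Finset.mem_univ, iff_true, and_true]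
    by_cases hx : x = i
    · tauto
    · by_cases hxC : x ∈ C <;> tauto
  have h3 : zeroOn s ({i} : Finset (Fin n)) = Function.update s i 0 := by
    funext j; by_cases h : j = i <;> simp [zeroOn, Function.update_apply, h]
  have h0 : 0 ≤ v (zeroOn s Finset.univ) := hpos _ (zeroOn_nonneg s hs _)
  rw [h1, h2, h3] at key
  linarith

/-- Lemma 6.4 (lem:other_cover): with SOS valuations `v i T` that are
nonnegative on nonnegative vectors, averaging, over a uniformly random set
`B ⊆ [n]` of potential winners, the optimal proxy welfare of the agents in `B`
computed at signals zeroed on `B`, recovers at least one quarter of the OTHER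
component `Σ_i v_{i T*_i}(s_{−i}, 0_i)` of any allocation `T*`; i.e., the
Random Sampling mechanism is a 4-approximation to the OTHER component. -/
theorem random_sampling_other_cover (n m : ℕ)
    (s : Fin n → ℝ) (hs : ∀ l, 0 ≤ s l)
    (v : Fin n → Finset (Fin m) → (Fin n → ℝ) → ℝ)
    (hsos : ∀ i T, dSOS 1 (v i T))
    (hpos : ∀ i T (t : Fin n → ℝ), (∀ l, 0 ≤ t l) → 0 ≤ v i T t)
    (Tstar : Fin n → Finset (Fin m)) (hTstar : IsAlloc Tstar) :
    (1 / 2 ^ n : ℝ) *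
        ∑ B ∈ (Finset.univ : Finset (Fin n)).powerset,
          allocSup (fun S => ∑ i ∈ B,
            v i (S i) (fun j => if j ∈ B then 0 else s j))
      ≥ (1 / 4) * ∑ i, v i (Tstar i) (Function.update s i 0) := by
  classical
  set a : Fin n → Finset (Fin n) → ℝ := fun i B => v i (Tstar i) (zeroOn s B) with ha
  -- Step 1: allocSup dominates the value of Tstar
  have hstep1 : ∀ B ∈ (Finset.univ : Finset (Fin n)).powerset,
      (∑ i ∈ B, a i B) ≤
        allocSup (fun S => ∑ i ∈ B, v i (S i) (fun j => if j ∈ B then 0 else s j)) := by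
    intro B _
    have hbdd : BddAbove (Set.range (fun T : {T : Fin n → Finset (Fin m) // IsAlloc T} =>
        ∑ i ∈ B, v i (T.1 i) (fun j => if j ∈ B then 0 else s j))) :=
      Set.Finite.bddAbove (Set.finite_range _)
    have := le_ciSup hbdd ⟨Tstar, hTstar⟩
    exact this
  -- Step 2: swap the sums
  have hswap : ∑ B ∈ (Finset.univ : Finset (Fin n)).powerset, ∑ i ∈ B, a i B
      = ∑ i : Fin n,
          ∑ C ∈ ((Finset.univ : Finset (Fin n)).erase i).powerset, a i (insert i C) := by
    have e1 : ∑ B ∈ (Finset.univ : Finset (Fin n)).powerset, ∑ i ∈ B, a i B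
        = ∑ B ∈ (Finset.univ : Finset (Fin n)).powerset,
            ∑ i : Fin n, if i ∈ B then a i B else 0 := by
      refine Finset.sum_congr rfl fun B _ => ?_
      rw [Finset.sum_ite_mem, Finset.univ_inter]
    rw [e1, Finset.sum_comm]
    refine Finset.sum_congr rfl fun i _ => ?_
    have hins : (Finset.univ : Finset (Fin n)) = insert i (Finset.univ.erase i) :=
      (Finset.insert_erase (Finset.mem_univ i)).symm
    conv_lhs => rw [hins]
    rw [Finset.sum_powerset_insert (Finset.notMem_erase i _)]
    have z1 : ∑ C ∈ (Finset.univ.erase i).powerset, (if i ∈ C then a i C else 0) = 0 := by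
      refine Finset.sum_eq_zero fun C hC => ?_
      have : i ∉ C := fun h => (Finset.mem_erase.mp ((Finset.mem_powerset.mp hC) h)).1 rfl
      simp [this]
    rw [z1, zero_add]
    refine Finset.sum_congr rfl fun C hC => ?_
    simp
  -- complement involution
  have hflip : ∀ i : Fin n,
      ∑ C ∈ ((Finset.univ : Finset (Fin n)).erase i).powerset,
          a i (insert i ((Finset.univ.erase i) \ C))
      = ∑ C ∈ ((Finset.univ : Finset (Fin n)).erase i).powerset, a i (insert i C) := by
    intro i
    refine Finset.sum_nbij' (fun C => (Finset.univ.erase i) \ C)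
      (fun C => (Finset.univ.erase i) \ C) ?_ ?_ ?_ ?_ ?_
    · intro C hC; simp [Finset.mem_powerset]
    · intro C hC; simp [Finset.mem_powerset]
    · intro C hC
      exact Finset.sdiff_sdiff_eq_self (Finset.mem_powerset.mp hC)
    · intro C hC
      exact Finset.sdiff_sdiff_eq_self (Finset.mem_powerset.mp hC)
    · intro C hC; rfl
  -- pairing bound
  have hpair : ∀ i : Fin n,
      (2:ℝ)^(n-1) * v i (Tstar i) (Function.update s i 0)
      ≤ (2:ℝ) * ∑ C ∈ ((Finset.univ : Finset (Fin n)).erase i).powerset, a i (insert i C) := by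
    intro i
    have hcard : (((Finset.univ : Finset (Fin n)).erase i).powerset).card = 2^(n-1) := by
      rw [Finset.card_powerset, Finset.card_erase_of_mem (Finset.mem_univ i),
        Finset.card_univ, Fintype.card_fin]
    have hsum : (2:ℝ) * ∑ C ∈ ((Finset.univ : Finset (Fin n)).erase i).powerset, a i (insert i C)
        = ∑ C ∈ ((Finset.univ : Finset (Fin n)).erase i).powerset,
            (a i (insert i C) + a i (insert i ((Finset.univ.erase i) \ C))) := by
      rw [Finset.sum_add_distrib, hflip i]; ring
    rw [hsum]
    calc (2:ℝ)^(n-1) * v i (Tstar i) (Function.update s i 0)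
        = ∑ _C ∈ ((Finset.univ : Finset (Fin n)).erase i).powerset,
            v i (Tstar i) (Function.update s i 0) := by
          rw [Finset.sum_const, hcard, nsmul_eq_mul]; push_cast; ring
      _ ≤ _ := by
          refine Finset.sum_le_sum fun C hC => ?_
          exact pair_ge s hs (v i (Tstar i)) (hsos i (Tstar i))
            (fun t ht => hpos i (Tstar i) t ht) i C (Finset.mem_powerset.mp hC)
  -- combine
  have hS : ∑ i : Fin n, ∑ C ∈ ((Finset.univ : Finset (Fin n)).erase i).powerset, a i (insert i C)
      ≤ ∑ B ∈ (Finset.univ : Finset (Fin n)).powerset,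
          allocSup (fun S => ∑ i ∈ B, v i (S i) (fun j => if j ∈ B then 0 else s j)) := by
    rw [← hswap]; exact Finset.sum_le_sum hstep1
  set S : ℝ := ∑ B ∈ (Finset.univ : Finset (Fin n)).powerset,
      allocSup (fun S => ∑ i ∈ B, v i (S i) (fun j => if j ∈ B then 0 else s j)) with hSdef
  set W : ℝ := ∑ i, v i (Tstar i) (Function.update s i 0) with hWdef
  have hA : (2:ℝ)^(n-1) * W ≤ 2 * ∑ i : Fin n,
      ∑ C ∈ ((Finset.univ : Finset (Fin n)).erase i).powerset, a i (insert i C) := by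
    rw [hWdef, Finset.mul_sum, Finset.mul_sum]
    exact Finset.sum_le_sum fun i _ => hpair i
  rcases Nat.eq_zero_or_pos n with hn | hn
  · -- n = 0 : both sides trivial
    have hW0 : W = 0 := by
      rw [hWdef]; subst hn; simp
    have hS0 : 0 ≤ S := by
      rw [hSdef]
      refine Finset.sum_nonneg fun B hB => ?_
      refine le_trans ?_ (hstep1 B hB)
      exact Finset.sum_nonneg fun i _ =>
        hpos i (Tstar i) _ (zeroOn_nonneg s hs B)
    rw [hW0]
    have h2n : (0:ℝ) < 2 ^ n := by positivity
    rw [mul_zero]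
    positivity
  · set p : ℝ := (2:ℝ)^(n-1) with hpdef
    have hp2n : (2:ℝ)^n = p * 2 := by
      rw [hpdef, ← pow_succ, Nat.sub_add_cancel hn]
    have hppos : (0:ℝ) < p := by positivity
    have hS2 : p * W ≤ 2 * S := le_trans hA (by linarith)
    rw [hp2n]
    have e : (1/(p*2)) * S - (1/4) * W = (1/(p*4)) * (2*S - p*W) := by
      field_simp; ring
    have hnn : 0 ≤ (1/(p*4)) * (2*S - p*W) :=
      mul_nonneg (by positivity) (by linarith)
    linarith
end

section
/- Let d ≥ 1 and let v : (Fin n → ℝ) → ℝ be d-strong-SOS, nonnegative on nonnegative vectors, and weakly increasing in each coordinate. Then for every coordinate i and all reals a, σ with 0 ≤ a ≤ σ ≤ 2a, v( σ·e_i ) ≤ (d+1) · v( a·e_i ), where x·e_i denotes the vector with value x at coordinate i and 0 elsewhere. -/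
/-- `v` is a `d`-approximate strongly-submodular-over-signals
(`d`-strong-SOS) valuation: for every coordinate `j`, every `δ ≥ 0`, and all
vectors `0 ≤ t' ≤ t` coordinatewise,
`d·(v(t' + δ·e_j) − v(t')) ≥ v(t + δ·e_j) − v(t)`. -/
def dStrongSOS {n : ℕ} (d : ℝ) (v : (Fin n → ℝ) → ℝ) : Prop :=
  ∀ (j : Fin n) (δ : ℝ), 0 ≤ δ →
    ∀ t t' : Fin n → ℝ, (∀ l, 0 ≤ t' l) → (∀ l, t' l ≤ t l) →
      d * (v (Function.update t' j (t' j + δ)) - v t') ≥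
        v (Function.update t j (t j + δ)) - v t

namespace dStrongSOS

variable {n : ℕ} {d : ℝ} {v : (Fin n → ℝ) → ℝ}

theorem single_two_mul_sub_le (hv : dStrongSOS d v) (i : Fin n) {a : ℝ} (ha : 0 ≤ a) :
    v (Pi.single i (2 * a)) - v (Pi.single i a) ≤ d * (v (Pi.single i a) - v 0) := by
  have h := hv i a ha (Pi.single i a) 0 (fun _ => le_rfl) (Pi.single_nonneg.mpr ha)
  -- `Pi.single i a` is `update 0 i a`, so updating it again at `i` overwrites that value.
  rwa [Pi.zero_apply, zero_add, Pi.single_eq_same, ← two_mul, ← Pi.single, Pi.single,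
    Function.update_idem, ← Pi.single] at h

theorem single_two_mul_le (hv : dStrongSOS d v) (hd : 0 ≤ d) (hv0 : 0 ≤ v 0) (i : Fin n)
    {a : ℝ} (ha : 0 ≤ a) : v (Pi.single i (2 * a)) ≤ (d + 1) * v (Pi.single i a) := by
  nlinarith [hv.single_two_mul_sub_le i ha]

end dStrongSOS

theorem strong_sos_doubling_general {n : ℕ} (d : ℝ) (hd : 1 ≤ d)
    (v : (Fin n → ℝ) → ℝ) (hv : dStrongSOS d v)
    (hpos : ∀ t : Fin n → ℝ, (∀ l, 0 ≤ t l) → 0 ≤ v t)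
    (hmono : ∀ t t' : Fin n → ℝ, (∀ l, t l ≤ t' l) → v t ≤ v t')
    (i : Fin n) (a c : ℝ) (ha : 0 ≤ a) (hc : c ≤ 2 * a) :
    v (fun l => if l = i then c else 0)
      ≤ (d + 1) * v (fun l => if l = i then a else 0) := by
  simp only [← Pi.single_apply]
  calc v (Pi.single i c)
      ≤ v (Pi.single i (2 * a)) := hmono _ _ (Pi.single_mono (i := i) hc)
    _ ≤ (d + 1) * v (Pi.single i a) :=
      hv.single_two_mul_le (by linarith) (hpos 0 fun _ => le_rfl) i ha

/-- The doubling inequality (Equations (6) and (9) of the paper) behind the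
Random Bucket analysis: for a nonnegative, monotone, `d`-strong-SOS valuation
`v`, any coordinate `i` and reals `0 ≤ a ≤ σ ≤ 2a`, one has
`v(σ·e_i) ≤ (d+1)·v(a·e_i)`. -/
theorem strong_sos_doubling {n : ℕ} (d : ℝ) (hd : 1 ≤ d)
    (v : (Fin n → ℝ) → ℝ) (hv : dStrongSOS d v)
    (hpos : ∀ t : Fin n → ℝ, (∀ l, 0 ≤ t l) → 0 ≤ v t)
    (hmono : ∀ t t' : Fin n → ℝ, (∀ l, t l ≤ t' l) → v t ≤ v t')
    (i : Fin n) (a c : ℝ) (ha : 0 ≤ a) (hac : a ≤ c) (hc : c ≤ 2 * a) :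
    v (fun l => if l = i then c else 0)
      ≤ (d + 1) * v (fun l => if l = i then a else 0) :=
  strong_sos_doubling_general d hd v hv hpos hmono i a c ha hc
end

section
/- Let K ≥ 1 and k = 2^K. Consider n agents with signals s : Fin n → ℕ in {0,…,k−1}, m items, and for each agent i and subset T of the items a valuation v_{iT} : (Fin n → ℝ) → ℝ that is strong-SOS (1-strong-SOS), nonnegative on nonnegative vectors, and weakly increasing in each coordinate. For ℓ ∈ {1,…,K}, let N_{B_ℓ} = {i : s_i ≥ 2^{ℓ−1}} and let s̄^ℓ(j) = min(s_j, 2^{ℓ−1}). Then for every allocation T*, (1/K) · Σ_{ℓ=1}^{K} [ max over allocations S of Σ_{i ∈ N_{B_ℓ}} v_{iS_i}(s̄^ℓ) ] ≥ (1/(2K)) · Σ_{i : s_i ≥ 1} v_{iT*_i}( s_i·e_i ). Equivalently, the Random Bucket mechanism gives a 2·log₂(k)-approximation to the SELF component of the optimal social welfare. -/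
/-- Lemma 6.5 (lem:self_cover_strongly_submod): with `k = 2^K`, signals
`s i ∈ {0,…,k−1}`, and strong-SOS valuations (nonnegative on nonnegative
vectors, weakly increasing in each coordinate), the Random Bucket mechanism —
pick `ℓ ∈ {1,…,K}` uniformly and allocate optimally among the agents with
signal `≥ 2^{ℓ−1}` using proxy values at the capped signals
`s̄^ℓ(j) = min (s j) 2^{ℓ−1}` — gives a `2·log₂ k`-approximation to the SELF
component `Σ_{i : s_i ≥ 1} v_{i T*_i}(0_{−i}, s_i)` of any allocation `T*`. -/
theorem random_bucket_self_cover (K : ℕ) (hK : 1 ≤ K) (n m : ℕ)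
    (s : Fin n → ℕ) (hs : ∀ i, s i ≤ 2 ^ K - 1)
    (v : Fin n → Finset (Fin m) → (Fin n → ℝ) → ℝ)
    (hsos : ∀ i T, dStrongSOS 1 (v i T))
    (hpos : ∀ i T (t : Fin n → ℝ), (∀ l, 0 ≤ t l) → 0 ≤ v i T t)
    (hmono : ∀ i T (t t' : Fin n → ℝ), (∀ l, t l ≤ t' l) → v i T t ≤ v i T t')
    (Tstar : Fin n → Finset (Fin m)) (hTstar : IsAlloc Tstar) :
    (1 / (K : ℝ)) * ∑ ℓ ∈ Finset.Icc 1 K,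
        allocSup (fun S => ∑ i ∈ Finset.univ.filter (fun i => 2 ^ (ℓ - 1) ≤ s i),
          v i (S i) (fun j => ((min (s j) (2 ^ (ℓ - 1)) : ℕ) : ℝ)))
      ≥ (1 / (2 * (K : ℝ))) * ∑ i ∈ Finset.univ.filter (fun i => 1 ≤ s i),
          v i (Tstar i) (fun j => if j = i then (s i : ℝ) else 0) := by

  classical
  have hKpos : (0:ℝ) < K := by exact_mod_cast hK
  set w : Fin n → ℝ :=
    fun i => v i (Tstar i) (fun j => if j = i then (s i : ℝ) else 0) with hw
  set L : Fin n → ℕ := fun i => Nat.log 2 (s i) + 1 with hLdef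
  -- key per-agent bound
  have key : ∀ i : Fin n, 1 ≤ s i →
      w i ≤ 2 * v i (Tstar i)
        (fun j => ((min (s j) (2 ^ (L i - 1)) : ℕ) : ℝ)) := by
    intro i hi
    have hne : s i ≠ 0 := by omega
    have hle : 2 ^ (L i - 1) ≤ s i := by
      simpa [hLdef] using Nat.pow_log_le_self 2 hne
    have hlt : s i < 2 * 2 ^ (L i - 1) := by
      have h := Nat.lt_pow_succ_log_self (b := 2) (by norm_num) (s i)
      have h2 : (2:ℕ) ^ (Nat.log 2 (s i) + 1) = 2 * 2 ^ (Nat.log 2 (s i)) := by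
        rw [pow_succ]; ring
      simp only [hLdef, Nat.add_sub_cancel]
      omega
    set c : ℝ := ((2 ^ (L i - 1) : ℕ) : ℝ) with hc
    have hc0 : (0:ℝ) ≤ c := by positivity
    have hcle : c ≤ (s i : ℝ) := by rw [hc]; exact_mod_cast hle
    have hslt : (s i : ℝ) ≤ 2 * c := by
      have : (s i : ℝ) < 2 * c := by rw [hc]; exact_mod_cast hlt
      linarith
    have hsos' := hsos i (Tstar i) i ((s i : ℝ) - c) (by linarith)
      (fun j => if j = i then c else 0) (fun _ => 0)
      (fun l => le_refl 0)
      (fun l => by split <;> simp [hc0])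
    have e1 : Function.update (fun _ : Fin n => (0:ℝ)) i
        ((fun _ : Fin n => (0:ℝ)) i + ((s i : ℝ) - c))
        = fun j => if j = i then (s i : ℝ) - c else 0 := by
      funext j
      simp [Function.update_apply]
    have e2 : Function.update (fun j : Fin n => if j = i then c else 0) i
        ((fun j : Fin n => if j = i then c else 0) i + ((s i : ℝ) - c))
        = fun j => if j = i then (s i : ℝ) else 0 := by
      funext j
      by_cases h : j = i
      · subst h
        simp only [Function.update_self]
        norm_num
      · simp [Function.update_apply, h]
    rw [e1, e2, one_mul] at hsos'
    have hm1 : v i (Tstar i) (fun j => if j = i then (s i : ℝ) - c else 0)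
        ≤ v i (Tstar i) (fun j => if j = i then c else 0) := by
      apply hmono
      intro l; split <;> linarith
    have hp0 : 0 ≤ v i (Tstar i) (fun _ : Fin n => (0:ℝ)) :=
      hpos _ _ _ (fun _ => le_refl 0)
    have hm2 : v i (Tstar i) (fun j => if j = i then c else 0)
        ≤ v i (Tstar i) (fun j => ((min (s j) (2 ^ (L i - 1)) : ℕ) : ℝ)) := by
      apply hmono
      intro l
      by_cases h : l = i
      · subst h
        rw [if_pos rfl, min_eq_right hle]
      · rw [if_neg h]
        positivity
    simp only [hw]
    linarith
  -- fibers
  set fib : ℕ → Finset (Fin n) :=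
    fun ℓ => (Finset.univ.filter (fun i => 1 ≤ s i)).filter (fun i => L i = ℓ)
      with hfib
  have hmaps : ∀ i ∈ Finset.univ.filter (fun i => 1 ≤ s i),
      L i ∈ Finset.Icc 1 K := by
    intro i hi
    simp only [Finset.mem_filter] at hi
    have hne : s i ≠ 0 := by omega
    have hone : (1:ℕ) ≤ 2 ^ K := Nat.one_le_two_pow
    have hlt : s i < 2 ^ K := by have := hs i; omega
    have : Nat.log 2 (s i) < K := Nat.log_lt_of_lt_pow hne hlt
    simp only [Finset.mem_Icc, hLdef]
    omega
  -- per-bucket bound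
  have bucket : ∀ ℓ ∈ Finset.Icc 1 K,
      ∑ i ∈ fib ℓ, w i / 2 ≤
      allocSup (fun S => ∑ i ∈ Finset.univ.filter (fun i => 2 ^ (ℓ - 1) ≤ s i),
          v i (S i) (fun j => ((min (s j) (2 ^ (ℓ - 1)) : ℕ) : ℝ))) := by
    intro ℓ hℓ
    have hsub : fib ℓ ⊆ Finset.univ.filter (fun i => 2 ^ (ℓ - 1) ≤ s i) := by
      intro i hi
      simp only [hfib, Finset.mem_filter] at hi ⊢
      obtain ⟨⟨-, h1⟩, hLi⟩ := hi
      have hne : s i ≠ 0 := by omega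
      have hpl := Nat.pow_log_le_self 2 hne
      refine ⟨Finset.mem_univ i, ?_⟩
      rw [← hLi]
      simpa [hLdef] using hpl
    have step1 : ∑ i ∈ fib ℓ, w i / 2 ≤
        ∑ i ∈ fib ℓ, v i (Tstar i)
          (fun j => ((min (s j) (2 ^ (ℓ - 1)) : ℕ) : ℝ)) := by
      apply Finset.sum_le_sum
      intro i hi
      simp only [hfib, Finset.mem_filter] at hi
      obtain ⟨⟨-, h1⟩, hLi⟩ := hi
      have hki := key i h1
      rw [hLi] at hki
      linarith
    have step2 : ∑ i ∈ fib ℓ, v i (Tstar i)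
          (fun j => ((min (s j) (2 ^ (ℓ - 1)) : ℕ) : ℝ)) ≤
        ∑ i ∈ Finset.univ.filter (fun i => 2 ^ (ℓ - 1) ≤ s i),
          v i (Tstar i) (fun j => ((min (s j) (2 ^ (ℓ - 1)) : ℕ) : ℝ)) := by
      apply Finset.sum_le_sum_of_subset_of_nonneg hsub
      intro i _ _
      apply hpos
      intro l; positivity
    have step3 : ∑ i ∈ Finset.univ.filter (fun i => 2 ^ (ℓ - 1) ≤ s i),
          v i (Tstar i) (fun j => ((min (s j) (2 ^ (ℓ - 1)) : ℕ) : ℝ)) ≤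
        allocSup (fun S => ∑ i ∈ Finset.univ.filter (fun i => 2 ^ (ℓ - 1) ≤ s i),
          v i (S i) (fun j => ((min (s j) (2 ^ (ℓ - 1)) : ℕ) : ℝ))) := by
      have hbdd : BddAbove (Set.range
          (fun T : {T : Fin n → Finset (Fin m) // IsAlloc T} =>
            ∑ i ∈ Finset.univ.filter (fun i => 2 ^ (ℓ - 1) ≤ s i),
              v i (T.1 i) (fun j => ((min (s j) (2 ^ (ℓ - 1)) : ℕ) : ℝ)))) :=
        Set.Finite.bddAbove (Set.finite_range _)
      exact le_ciSup hbdd ⟨Tstar, hTstar⟩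
    linarith
  -- sum over buckets
  have hsum : ∑ i ∈ Finset.univ.filter (fun i => 1 ≤ s i), w i / 2 ≤
      ∑ ℓ ∈ Finset.Icc 1 K,
        allocSup (fun S => ∑ i ∈ Finset.univ.filter (fun i => 2 ^ (ℓ - 1) ≤ s i),
          v i (S i) (fun j => ((min (s j) (2 ^ (ℓ - 1)) : ℕ) : ℝ))) := by
    have hfw := Finset.sum_fiberwise_of_maps_to hmaps (fun i => w i / 2)
    calc ∑ i ∈ Finset.univ.filter (fun i => 1 ≤ s i), w i / 2
        = ∑ ℓ ∈ Finset.Icc 1 K, ∑ i ∈ fib ℓ, w i / 2 := hfw.symm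
      _ ≤ _ := Finset.sum_le_sum bucket
  rw [ge_iff_le]
  have hA : (1 / (2 * (K:ℝ))) * ∑ i ∈ Finset.univ.filter (fun i => 1 ≤ s i), w i
      = (1 / (K:ℝ)) * ∑ i ∈ Finset.univ.filter (fun i => 1 ≤ s i), w i / 2 := by
    rw [Finset.mul_sum, Finset.mul_sum]
    apply Finset.sum_congr rfl
    intro i _
    rw [one_div, one_div, mul_inv]
    ring
  rw [hA]
  apply mul_le_mul_of_nonneg_left hsum
  positivity
end

section
/- Let S be a finite nonempty type and V : S → S → ℝ (V s t is the value an agent of true type s obtains under the outcome chosen for report t). Define the edge weight w s t = V s s − V s t. Then the following are equivalent: (i) there exists p : S → ℝ such that V s s − p s ≥ V s t − p t for all s, t ∈ S (i.e., truthful reporting is optimal under payments p); (ii) every directed cycle has nonnegative weight, i.e., for every m ≥ 1 and every function σ : ZMod m → S, Σ_{j} w (σ j) (σ (j+1)) ≥ 0. -/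
open Finset

namespace CycleMonAux

variable {S : Type} [Fintype S] [Nonempty S]

lemma sum_zmod_range (m : ℕ) (g : ZMod (m+1) → ℝ) :
    ∑ j : ZMod (m+1), g j = ∑ i ∈ Finset.range (m+1), g (i : ZMod (m+1)) := by
  refine Finset.sum_nbij' (fun j : ZMod (m+1) => j.val) (fun i : ℕ => (i : ZMod (m+1)))
    (fun a _ => Finset.mem_range.2 (ZMod.val_lt a)) (fun a _ => Finset.mem_univ _)
    ?_ (fun a ha => ZMod.val_cast_of_lt (Finset.mem_range.1 ha)) ?_
  · intro a _; simp [ZMod.natCast_val, ZMod.cast_id]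
  · intro a _; simp

/-- A segment of a walk that returns to its start has nonnegative weight. -/
lemma segment_nonneg (w : S → S → ℝ)
    (H : ∀ m : ℕ, ∀ σ : ZMod (m + 1) → S,
        0 ≤ ∑ j : ZMod (m + 1), w (σ j) (σ (j + 1)))
    (f : ℕ → S) (a m : ℕ) (hf : f (a + (m + 1)) = f a) :
    0 ≤ ∑ i ∈ Finset.range (m + 1), w (f (a + i)) (f (a + i + 1)) := by
  have h := H m (fun j => f (a + j.val))
  rw [sum_zmod_range] at h
  refine h.trans_eq (Finset.sum_congr rfl fun i hi => ?_)
  have hi' := Finset.mem_range.1 hi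
  have key : (((i : ℕ) : ZMod (m+1)) + 1).val = if i = m then 0 else i + 1 := by
    rw [show (((i : ℕ) : ZMod (m+1)) + 1) = (((i+1 : ℕ)) : ZMod (m+1)) by push_cast; ring]
    by_cases h2 : i = m
    · subst h2; simp
    · have hlt : i + 1 < m + 1 := by omega
      rw [ZMod.val_cast_of_lt hlt]; simp [h2]
  rw [ZMod.val_cast_of_lt hi', key]
  by_cases h2 : i = m
  · rw [if_pos h2, h2, Nat.add_zero,
      show a + m + 1 = a + (m + 1) from Nat.add_assoc a m 1, hf]
  · rw [if_neg h2, ← Nat.add_assoc]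

/-- Any walk has weight bounded below, given nonnegative cycles. -/
lemma walk_lb (w : S → S → ℝ)
    (H : ∀ m : ℕ, ∀ σ : ZMod (m + 1) → S,
        0 ≤ ∑ j : ZMod (m + 1), w (σ j) (σ (j + 1)))
    (c : ℝ) (hc : c ≤ 0) (hw : ∀ s t, c ≤ w s t) :
    ∀ k (f : ℕ → S),
      (Fintype.card S : ℝ) * c ≤ ∑ i ∈ Finset.range k, w (f i) (f (i+1)) := by
  intro k
  induction k using Nat.strong_induction_on with
  | _ k IH =>
    intro f
    by_cases hk : k ≤ Fintype.card S
    · have h1 : (Finset.range k).card • c ≤ ∑ i ∈ Finset.range k, w (f i) (f (i+1)) :=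
        Finset.card_nsmul_le_sum _ _ _ (fun i _ => hw _ _)
      rw [Finset.card_range, nsmul_eq_mul] at h1
      refine le_trans ?_ h1
      have hkr : (k : ℝ) ≤ (Fintype.card S : ℝ) := by exact_mod_cast hk
      nlinarith
    · push_neg at hk
      obtain ⟨x, y, hxy, hfxy⟩ := Fintype.exists_ne_map_eq_of_card_lt
        (fun i : Fin (Fintype.card S + 1) => f i) (by simp)
      have hxyne : (x : ℕ) ≠ (y : ℕ) := fun h => hxy (Fin.ext h)
      obtain ⟨a, b, hab, hbN, hfab⟩ : ∃ a b : ℕ, a < b ∧ b ≤ Fintype.card S ∧ f b = f a := by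
        rcases lt_or_gt_of_ne hxyne with h | h
        · exact ⟨x, y, h, Nat.lt_succ_iff.1 y.isLt, hfxy.symm⟩
        · exact ⟨y, x, h, Nat.lt_succ_iff.1 x.isLt, hfxy⟩
      set m : ℕ := b - a - 1 with hm
      have hb : b = a + (m + 1) := by omega
      have hf' : f (a + (m + 1)) = f a := by rw [← hb]; exact hfab
      set F : ℕ → ℝ := fun i => w (f i) (f (i+1)) with hF
      set g : ℕ → S := fun i => if i ≤ a then f i else f (i + (m + 1)) with hg
      set G : ℕ → ℝ := fun i => w (g i) (g (i+1)) with hG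
      set k' : ℕ := k - (m + 1) with hk'
      have hak' : a ≤ k' := by omega
      have hbk : b ≤ k := by omega
      -- split the walk sum
      have hsplit : ∑ i ∈ Finset.range k, F i
          = (∑ i ∈ Finset.range a, F i + ∑ i ∈ Finset.Ico a b, F i)
            + ∑ i ∈ Finset.Ico b k, F i := by
        rw [Finset.range_eq_Ico,
          ← Finset.sum_Ico_consecutive F (Nat.zero_le b) hbk,
          ← Finset.sum_Ico_consecutive F (Nat.zero_le a) (le_of_lt hab),
          ← Finset.range_eq_Ico]
      -- the middle part is a cycle, hence nonnegative
      have hcyc : 0 ≤ ∑ i ∈ Finset.Ico a b, F i := by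
        rw [Finset.sum_Ico_eq_sum_range, show b - a = m + 1 by omega]
        exact segment_nonneg w H f a m hf'
      -- the remaining parts form the walk g of length k'
      have hgsplit : ∑ i ∈ Finset.range k', G i
          = ∑ i ∈ Finset.range a, G i + ∑ i ∈ Finset.Ico a k', G i := by
        rw [Finset.range_eq_Ico, ← Finset.sum_Ico_consecutive G (Nat.zero_le a) hak',
          ← Finset.range_eq_Ico]
      have h1 : ∑ i ∈ Finset.range a, G i = ∑ i ∈ Finset.range a, F i := by
        refine Finset.sum_congr rfl fun i hi => ?_
        have hia := Finset.mem_range.1 hi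
        simp only [hG, hF, hg]
        rw [if_pos (by omega : i ≤ a), if_pos (by omega : i + 1 ≤ a)]
      have h2 : ∑ i ∈ Finset.Ico a k', G i = ∑ i ∈ Finset.Ico b k, F i := by
        rw [Finset.sum_Ico_eq_sum_range, Finset.sum_Ico_eq_sum_range,
          show k - b = k' - a by omega]
        refine Finset.sum_congr rfl fun i hi => ?_
        simp only [hG, hF, hg]
        have e2 : a + i + 1 ≤ a ↔ False := by simp
        rw [if_neg (by omega : ¬ a + i + 1 ≤ a)]
        have e3 : a + i + 1 + (m + 1) = b + i + 1 := by omega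
        rw [e3]
        by_cases hi0 : i = 0
        · subst hi0
          rw [if_pos (by omega : a + 0 ≤ a)]
          rw [show a + 0 = a by omega, show b + 0 = b by omega, hfab]
        · rw [if_neg (by omega : ¬ a + i ≤ a), show a + i + (m + 1) = b + i by omega]
      have hksum : ∑ i ∈ Finset.range k, F i
          = ∑ i ∈ Finset.range k', G i + ∑ i ∈ Finset.Ico a b, F i := by
        rw [hsplit, hgsplit, h1, h2]; ring
      have hklt : k' < k := by omega
      have hIH := IH k' hklt g
      calc (Fintype.card S : ℝ) * c
          ≤ ∑ i ∈ Finset.range k', G i := hIH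
        _ ≤ ∑ i ∈ Finset.range k', G i + ∑ i ∈ Finset.Ico a b, F i := by linarith
        _ = ∑ i ∈ Finset.range k, F i := hksum.symm

/-- Bellman–Ford style iteration: `Wseq w n s` is the least weight of a walk
from `s` of length at most `n`. -/
noncomputable def Wseq (w : S → S → ℝ) : ℕ → S → ℝ
  | 0 => fun _ => 0
  | n+1 => fun s => min (Wseq w n s)
      (Finset.univ.inf' Finset.univ_nonempty fun t => w s t + Wseq w n t)

lemma Wseq_step (w : S → S → ℝ) (n : ℕ) (s t : S) :
    Wseq w (n+1) s ≤ w s t + Wseq w n t :=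
  le_trans (min_le_right _ _) (Finset.inf'_le _ (Finset.mem_univ t))

lemma Wseq_walk (w : S → S → ℝ) :
    ∀ n (s : S), ∃ (k : ℕ) (f : ℕ → S), f 0 = s ∧
      Wseq w n s = ∑ i ∈ Finset.range k, w (f i) (f (i+1)) := by
  intro n
  induction n with
  | zero => exact fun s => ⟨0, fun _ => s, rfl, by simp [Wseq]⟩
  | succ n IH =>
    intro s
    have hW : Wseq w (n+1) s = min (Wseq w n s)
        (Finset.univ.inf' Finset.univ_nonempty fun t => w s t + Wseq w n t) := rfl
    rcases min_cases (Wseq w n s)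
        (Finset.univ.inf' Finset.univ_nonempty fun t => w s t + Wseq w n t) with
      ⟨hmin, _⟩ | ⟨hmin, _⟩
    · obtain ⟨k, f, hf0, hsum⟩ := IH s
      exact ⟨k, f, hf0, by rw [hW, hmin, hsum]⟩
    · obtain ⟨t0, _, ht0⟩ := Finset.exists_mem_eq_inf' Finset.univ_nonempty
        (fun t => w s t + Wseq w n t)
      obtain ⟨k, f, hf0, hsum⟩ := IH t0
      refine ⟨k + 1, fun i => Nat.casesOn i s f, rfl, ?_⟩
      rw [hW, hmin, ht0, Finset.sum_range_succ']
      have e1 : ∀ i ∈ Finset.range k,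
          w ((fun i => (Nat.casesOn i s f : S)) (i+1)) ((fun i => (Nat.casesOn i s f : S)) (i+1+1))
            = w (f i) (f (i+1)) := fun i _ => rfl
      rw [Finset.sum_congr rfl e1, ← hsum]
      show w s t0 + Wseq w n t0 = Wseq w n t0 + w s (f 0)
      rw [hf0]
      exact add_comm _ _

lemma Wseq_lb (w : S → S → ℝ)
    (H : ∀ m : ℕ, ∀ σ : ZMod (m + 1) → S,
        0 ≤ ∑ j : ZMod (m + 1), w (σ j) (σ (j + 1)))
    (c : ℝ) (hc : c ≤ 0) (hw : ∀ s t, c ≤ w s t) (n : ℕ) (s : S) :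
    (Fintype.card S : ℝ) * c ≤ Wseq w n s := by
  obtain ⟨k, f, _, hsum⟩ := Wseq_walk w n s
  rw [hsum]
  exact walk_lb w H c hc hw k f

end CycleMonAux

open CycleMonAux in
/-- Cycle monotonicity (Theorem A.1, thm:cycle-mon, following Rochet 1987):
for a finite nonempty type `S` of signals and `V s t` the value an agent with
true type `s` obtains under the outcome chosen for report `t`, there exist
payments `p` making truthful reporting optimal
(`V s s − p s ≥ V s t − p t` for all `s, t`) if and only if every directed
cycle has nonnegative weight, where the weight of edge `(s, t)` is
`V s s − V s t` and cycles of length `m ≥ 1` are given by functions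
`σ : ZMod m → S`. -/
theorem cycle_monotonicity (S : Type) [Fintype S] [Nonempty S]
    (V : S → S → ℝ) :
    (∃ p : S → ℝ, ∀ s t : S, V s s - p s ≥ V s t - p t) ↔
      (∀ m : ℕ, ∀ σ : ZMod (m + 1) → S,
        0 ≤ ∑ j : ZMod (m + 1), (V (σ j) (σ j) - V (σ j) (σ (j + 1)))) := by
  constructor
  · rintro ⟨p, hp⟩ m σ
    have h2 : ∑ j : ZMod (m+1), (p (σ j) - p (σ (j+1))) = 0 := by
      rw [Finset.sum_sub_distrib]
      have he : ∑ j : ZMod (m+1), p (σ (j+1)) = ∑ j : ZMod (m+1), p (σ j) :=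
        Fintype.sum_equiv (Equiv.addRight (1 : ZMod (m+1))) _ _ (fun j => rfl)
      rw [he, sub_self]
    calc (0:ℝ) = ∑ j : ZMod (m+1), (p (σ j) - p (σ (j+1))) := h2.symm
      _ ≤ ∑ j : ZMod (m+1), (V (σ j) (σ j) - V (σ j) (σ (j+1))) := by
          refine Finset.sum_le_sum fun j _ => ?_
          have := hp (σ j) (σ (j+1)); linarith
  · intro H
    set w : S → S → ℝ := fun s t => V s s - V s t with hwdef
    have Hw : ∀ m : ℕ, ∀ σ : ZMod (m + 1) → S,
        0 ≤ ∑ j : ZMod (m + 1), w (σ j) (σ (j + 1)) := H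
    set c : ℝ := Finset.univ.inf' Finset.univ_nonempty (fun q : S × S => w q.1 q.2) with hcdef
    set c0 : ℝ := min c 0 with hc0def
    have hc0 : c0 ≤ 0 := min_le_right _ _
    have hwc0 : ∀ s t, c0 ≤ w s t := fun s t =>
      le_trans (min_le_left _ _) (Finset.inf'_le _ (Finset.mem_univ (s, t)))
    have hbdd : ∀ s : S, BddBelow (Set.range fun n => Wseq w n s) := by
      intro s
      refine ⟨(Fintype.card S : ℝ) * c0, ?_⟩
      rintro x ⟨n, rfl⟩
      exact Wseq_lb w Hw c0 hc0 hwc0 n s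
    set p : S → ℝ := fun s => ⨅ n, Wseq w n s with hpdef
    have hple : ∀ (n : ℕ) (s : S), p s ≤ Wseq w n s := fun n s => ciInf_le (hbdd s) n
    have hkey : ∀ s t, p s ≤ w s t + p t := by
      intro s t
      have h1 : ∀ n : ℕ, p s - w s t ≤ Wseq w n t := by
        intro n
        have := (hple (n+1) s).trans (Wseq_step w n s t)
        linarith
      have h2 : p s - w s t ≤ p t := le_ciInf h1
      linarith
    refine ⟨p, fun s t => ?_⟩
    have := hkey s t
    simp only [hwdef] at this
    linarith
end

section
/- Let H and ε be reals with ε > 0 and H > 2 + ε. There are two items {a, b} and two unit-demand agents; only agent 1 has a signal s ∈ {0,1}. Item values: agent 1 has value 1 for a and 0 for b at s = 0, and value 1+H+ε for a and H for b at s = 1; agent 2 has value 0 for a and 1 for b at s = 0, and value H for a and 1 for b at s = 1. An agent's value for a set of items is the maximum of its item values in the set (0 for the empty set). Let x : {0,1} → (Finset {a,b} × Finset {a,b}) assign to each signal a pair of disjoint bundles (T₁(s), T₂(s)), and let p : {0,1} → ℝ be payments for agent 1 satisfying ex-post IC for agent 1: u₁(s, T₁(s)) − p(s) ≥ u₁(s,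 T₁(s')) − p(s') for all s, s' ∈ {0,1}, where u₁(s, T) is agent 1's value at signal s for bundle T. Let W(s) = u₁(s, T₁(s)) + u₂(s, T₂(s)). Then min( W(0)/2 , W(1)/(2H) ) ≤ (H + 2 + ε)/(2H). Consequently, as H → ∞ and ε → 0, no deterministic truthful mechanism achieves more than 1/2 of the optimal welfare for this single-crossing unit-demand instance. -/
/-- Lemma A.2 (lem:sclowertwodet): the two-item (`a = 0`, `b = 1`),
two-unit-demand-agent, single-crossing instance where only agent 1 has a
binary signal.  Item values: agent 1 has `(1, 0)` at `s = false` and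
`(1+H+ε, H)` at `s = true`; agent 2 has `(0, 1)` and `(H, 1)`.  An agent's
value for a bundle is the maximum of its item values (0 for ∅).  For every
deterministic allocation `x` into disjoint bundles and payments `p` for
agent 1 that are ex-post IC for agent 1, the worst-case welfare ratio over
the two signals is at most `(H + 2 + ε)/(2H)`; letting `H → ∞`, `ε → 0`,
no deterministic truthful mechanism beats `1/2` of the optimal welfare. -/
theorem unit_demand_single_crossing_det_lb (H ε : ℝ) (hε : 0 < ε) (hH : 2 + ε < H)
    (u1 u2 : Bool → Finset (Fin 2) → ℝ)
    (hu1 : ∀ b T, u1 b T =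
      T.fold max 0 (fun j => if b then (if j = 0 then 1 + H + ε else H)
                             else (if j = 0 then 1 else 0)))
    (hu2 : ∀ b T, u2 b T =
      T.fold max 0 (fun j => if b then (if j = 0 then H else 1)
                             else (if j = 0 then 0 else 1)))
    (x : Bool → Finset (Fin 2) × Finset (Fin 2))
    (hdisj : ∀ b, Disjoint (x b).1 (x b).2)
    (p : Bool → ℝ)
    (hIC : ∀ b b' : Bool, u1 b (x b).1 - p b ≥ u1 b (x b').1 - p b') :
    min ((u1 false (x false).1 + u2 false (x false).2) / 2)
        ((u1 true (x true).1 + u2 true (x true).2) / (2 * H))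
      ≤ (H + 2 + ε) / (2 * H) := by
  have hH0 : (0:ℝ) < H := by linarith
  have henum : ∀ T : Finset (Fin 2), T = ∅ ∨ T = {0} ∨ T = {1} ∨ T = {0,1} := by decide
  have h01 : (0:Fin 2) ∉ ({1} : Finset (Fin 2)) := by decide
  have hmono : u1 true (x true).1 + u1 false (x false).1 ≥
      u1 true (x false).1 + u1 false (x true).1 := by
    have h1 := hIC true false
    have h2 := hIC false true
    linarith
  by_cases h0 : (0:Fin 2) ∈ (x true).1
  · -- agent 1 gets item 0 at the high signal: welfare at s = true is ≤ H+2+ε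
    have h02 : (0:Fin 2) ∉ (x true).2 := Finset.disjoint_left.mp (hdisj true) h0
    have hu1t : u1 true (x true).1 ≤ 1 + H + ε := by
      rcases henum (x true).1 with h | h | h | h <;> rw [h] at h0 ⊢ <;>
        simp only [hu1, Finset.fold_insert h01, Finset.fold_singleton, Finset.fold_empty] <;>
        (try norm_num at h0) <;> norm_num [max_le_iff] <;> (try constructorm* _ ∧ _) <;> linarith
    have hu2t : u2 true (x true).2 ≤ 1 := by
      rcases henum (x true).2 with h | h | h | h <;> rw [h] at h02 ⊢ <;>
        simp only [hu2, Finset.fold_insert h01, Finset.fold_singleton, Finset.fold_empty] <;>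
        (try norm_num at h02) <;> norm_num [max_le_iff]
    refine le_trans (min_le_right _ _) ?_
    rw [div_le_div_iff₀ (by linarith) (by linarith)]
    nlinarith
  · -- agent 1 doesn't get item 0 at the high signal
    have hu1t : u1 true (x true).1 ≤ H := by
      rcases henum (x true).1 with h | h | h | h <;> rw [h] at h0 ⊢ <;>
        simp only [hu1, Finset.fold_insert h01, Finset.fold_singleton, Finset.fold_empty] <;>
        (try norm_num at h0) <;> norm_num [max_le_iff] <;> linarith
    have hu1t0 : 0 ≤ u1 false (x true).1 := by
      rcases henum (x true).1 with h | h | h | h <;> rw [h] <;>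
        simp only [hu1, Finset.fold_insert h01, Finset.fold_singleton, Finset.fold_empty] <;>
        norm_num [le_max_iff]
    -- IC forces agent 1 to not get item 0 at the low signal either
    have h0f : (0:Fin 2) ∉ (x false).1 := by
      intro h0f
      have e1 : u1 false (x false).1 ≤ 1 := by
        rcases henum (x false).1 with h | h | h | h <;> rw [h] at h0f ⊢ <;>
          simp only [hu1, Finset.fold_insert h01, Finset.fold_singleton, Finset.fold_empty] <;>
          (try norm_num at h0f) <;> norm_num [max_le_iff]
      have e2 : 1 + H + ε ≤ u1 true (x false).1 := by
        rcases henum (x false).1 with h | h | h | h <;> rw [h] at h0f ⊢ <;>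
          simp only [hu1, Finset.fold_insert h01, Finset.fold_singleton, Finset.fold_empty] <;>
          (try norm_num at h0f) <;> norm_num [le_max_iff]
      linarith
    have hu1f : u1 false (x false).1 ≤ 0 := by
      rcases henum (x false).1 with h | h | h | h <;> rw [h] at h0f ⊢ <;>
        simp only [hu1, Finset.fold_insert h01, Finset.fold_singleton, Finset.fold_empty] <;>
        (try norm_num at h0f) <;> norm_num [max_le_iff]
    have hu2f : u2 false (x false).2 ≤ 1 := by
      rcases henum (x false).2 with h | h | h | h <;> rw [h] <;>
        simp only [hu2, Finset.fold_insert h01, Finset.fold_singleton, Finset.fold_empty] <;>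
        norm_num [max_le_iff]
    refine le_trans (min_le_left _ _) ?_
    rw [div_le_div_iff₀ (by norm_num) (by linarith)]
    nlinarith
end

section
/- Let n ≥ 2 and H > 0. Consider n agents where only agent 1 has a signal s ∈ {0,1}, a downward-closed feasibility family I consisting of the sets {1}, ∅, and all subsets of {2,…,n}, and values v₁(0) = 1, v₁(1) = 1+H, and v_i(0) = 0, v_i(1) = H for all agents i ≥ 2. Let x : {0,1} → Finset (Fin n) be a deterministic allocation with x(0), x(1) ∈ I that is monotone for agent 1 (if 1 ∈ x(0) then 1 ∈ x(1)). Then min( Σ_{i ∈ x(0)} v_i(0) / 1 , Σ_{i ∈ x(1)} v_i(1) / ((n−1)·H) ) ≤ (1+H)/((n−1)·H). Consequently no deterministic ex-post IC mechanism achieves better than an (n−1)-approximation to the optimal welfare in this downward-closed setting, even though the valuations are single-crossing and SOS. -/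
/-!
If agent `a` is served at signal `0`, monotonicity serves it at signal `1` as well, and the
only feasible set containing `a` is `{a}`; the welfare at signal `1` is then `1 + H` against the
optimum `(n - 1) H`. Otherwise only agents of value `0` are served at signal `0`.
-/

open Finset

theorem Finset.eq_singleton_of_mem_insert_powerset_compl {α : Type*} [Fintype α] [DecidableEq α]
    {a : α} {s : Finset α} (hs : s ∈ insert {a} ({a}ᶜ : Finset α).powerset) (ha : a ∈ s) :
    s = {a} := by
  rcases mem_insert.mp hs with h | h
  · exact h
  · exact absurd (mem_powerset.mp h ha) (by simp)

theorem downward_closed_det_lb_general (n : ℕ) (H : ℝ) (hH : 0 < H)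
    (a : Fin n)
    (v : Fin n → Bool → ℝ)
    (hv : ∀ i b, v i b =
      if i = a then (if b then 1 + H else 1) else (if b then H else 0))
    (x : Bool → Finset (Fin n))
    (hfeas : ∀ b, x b ∈ insert ({a} : Finset (Fin n))
      ((({a} : Finset (Fin n))ᶜ).powerset))
    (hmono : a ∈ x false → a ∈ x true) :
    min ((∑ i ∈ x false, v i false) / 1)
        ((∑ i ∈ x true, v i true) / (((n : ℝ) - 1) * H))
      ≤ (1 + H) / (((n : ℝ) - 1) * H) := by
  by_cases ha : a ∈ x false
  · have hx : x true = {a} := eq_singleton_of_mem_insert_powerset_compl (hfeas true) (hmono ha)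
    refine (min_le_right _ _).trans_eq ?_
    simp [hx, hv]
  · have hzero : ∑ i ∈ x false, v i false = 0 :=
      sum_eq_zero fun i hi => by simp [hv, ne_of_mem_of_not_mem hi ha]
    have hn : (1 : ℝ) ≤ n := by exact_mod_cast a.pos
    refine (min_le_left _ _).trans ?_
    rw [hzero, zero_div]
    exact div_nonneg (by linarith) (mul_nonneg (by linarith) hH.le)

/-- Theorem B.1 (thm:dc-sc-lb): the downward-closed instance with `n ≥ 2`
agents where only agent `a` ("agent 1") has a binary signal, the feasibility
family consists of `{a}`, `∅`, and all subsets of the other agents, and the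
values are `v_a(0) = 1`, `v_a(1) = 1 + H`, `v_i(0) = 0`, `v_i(1) = H` for
`i ≠ a`.  Any deterministic allocation `x` with feasible served sets that is
monotone for agent `a` has worst-case welfare ratio at most
`(1+H)/((n−1)·H)`; as `H → ∞` this shows no deterministic ex-post IC
mechanism beats an `(n−1)`-approximation, even though the valuations are
single-crossing and SOS. -/
theorem downward_closed_det_lb (n : ℕ) (hn : 2 ≤ n) (H : ℝ) (hH : 0 < H)
    (a : Fin n)
    (v : Fin n → Bool → ℝ)
    (hv : ∀ i b, v i b =
      if i = a then (if b then 1 + H else 1) else (if b then H else 0))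
    (x : Bool → Finset (Fin n))
    (hfeas : ∀ b, x b ∈ insert ({a} : Finset (Fin n))
      ((({a} : Finset (Fin n))ᶜ).powerset))
    (hmono : a ∈ x false → a ∈ x true) :
    min ((∑ i ∈ x false, v i false) / 1)
        ((∑ i ∈ x true, v i true) / (((n : ℝ) - 1) * H))
      ≤ (1 + H) / (((n : ℝ) - 1) * H) :=
  downward_closed_det_lb_general n H hH a v hv x hfeas hmono
end

section
/- Consider n agents and m items with multi-dimensional signals s_{jT} ≥ 0 (for each agent j and each subset T of items) and separable valuations v_{jT}(t) = g_{jT}(t_{−j}) + h_{jT}(t_j), with all g_{jT} and h_{jT} weakly increasing and nonnegative. Fix a partition of the agents into sets A and B and fix i ∈ B. For a report profile ρ (ρ_{jT} = s_{jT} for all j ≠ i, while ρ_{iT} is arbitrary), define for j ∈ B the proxy w_{jT}(ρ) := g_{jT}( (ρ_{·T})|_{(A) coordinates kept, B∖{j} coordinates zeroed, restricted to coordinates ≠ j} ) + h_{jT}(ρ_{jT}); define w_{−i} := max over allocations (T_j)_{j ∈ B∖{i}} of Σ_j w_{jT_j}(ρ) (this does not depend on ρ_i); and for any allocation (T_j)_{j∈B}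 maximizing Σ_{j∈B} w_{jT_j}(ρ), define the payment p_i(ρ) := g_{iT_i}( (ρ_{·T_i})_{−i} ) − g_{iT_i}( (ρ_{·T_i})_{−i} with the coordinates in B∖{i} zeroed ) − Σ_{j ∈ B∖{i}} w_{jT_j}(ρ) + w_{−i}. Then: (IC) for any misreport r_i, if (T'_j) maximizes Σ_{j∈B} w_{jT_j} under the profile (r_i, s_{−i}) and (T*_j) maximizes it under the truthful profile s, then v_{iT'_i}(s_{·T'_i}) − p_i(r_i, s_{−i}) ≤ v_{iT*_i}(s_{·T*_i}) − p_i(s); and (IR) v_{iT*_i}(s_{·T*_i}) − p_i(s) ≥ 0. -/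
/-- Proxy value of agent `j` for bundle `T` under report profile `ρ`, with
potential-winner set `B`: the `g` part keeps the coordinates of `Bᶜ ∪ {j}` of
the reported signals for `T` and zeroes the rest, and the `h` part uses `j`'s
own report. -/
noncomputable def proxyW {n m : ℕ}
    (g : Fin n → Finset (Fin m) → (Fin n → ℝ) → ℝ)
    (h : Fin n → Finset (Fin m) → ℝ → ℝ) (B : Finset (Fin n))
    (ρ : Fin n → Finset (Fin m) → ℝ) (j : Fin n) (T : Finset (Fin m)) : ℝ :=
  g j T (fun l => if l = j ∨ l ∉ B then ρ l T else 0) + h j T (ρ j T)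

/-- Optimal proxy welfare of the agents in `B` other than `i`
(the mechanism's `w_{−i}`); it does not depend on agent `i`'s report. -/
noncomputable def wMinus {n m : ℕ}
    (g : Fin n → Finset (Fin m) → (Fin n → ℝ) → ℝ)
    (h : Fin n → Finset (Fin m) → ℝ → ℝ) (B : Finset (Fin n)) (i : Fin n)
    (ρ : Fin n → Finset (Fin m) → ℝ) : ℝ :=
  allocSup (fun T => ∑ j ∈ B.erase i, proxyW g h B ρ j (T j))

/-- The Random-Sampling VCG payment of winner `i ∈ B` under report profile `ρ`
when the chosen allocation is `T`:
`g_{iT_i}(ρ_{·T_i}) − g_{iT_i}(ρ_{·T_i} with B∖{i} zeroed)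
  − Σ_{j ∈ B∖{i}} w_{jT_j}(ρ) + w_{−i}(ρ)`
(the `g i (T i)` terms ignore coordinate `i`). -/
noncomputable def rsvcgPayment {n m : ℕ}
    (g : Fin n → Finset (Fin m) → (Fin n → ℝ) → ℝ)
    (h : Fin n → Finset (Fin m) → ℝ → ℝ) (B : Finset (Fin n)) (i : Fin n)
    (ρ : Fin n → Finset (Fin m) → ℝ) (T : Fin n → Finset (Fin m)) : ℝ :=
  g i (T i) (fun l => ρ l (T i))
    - g i (T i) (fun l => if l ∈ B ∧ l ≠ i then 0 else ρ l (T i))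
    - ∑ j ∈ B.erase i, proxyW g h B ρ j (T j)
    + wMinus g h B i ρ

/-!
Whatever agent `i` reports, `i`'s true utility equals the truthful proxy welfare
`∑_{j ∈ B} w_j(s, T_j)` of the chosen allocation minus `w_{−i}(s)`: the `g`-terms of the payment
turn `i`'s true value into its proxy value, and the proxies of the other agents in `B`, hence
also `w_{−i}`, never see `i`'s report, since coordinate `i` is zeroed in them. A misreport can
only change the allocation, and the truthful one maximizes the proxy welfare (IC). Taking any
allocation of the others and giving `i` nothing shows `w_{−i}(s)` is at most that maximum (IR).
-/

theorem IsAlloc.update_empty {n m : ℕ} {T : Fin n → Finset (Fin m)} (hT : IsAlloc T)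
    (i : Fin n) : IsAlloc (Function.update T i ∅) := by
  intro a b hab
  rcases eq_or_ne a i with rfl | ha
  · simp
  rcases eq_or_ne b i with rfl | hb
  · simp
  simpa [Function.update_of_ne ha, Function.update_of_ne hb] using hT a b hab

theorem allocSup_le {n m : ℕ} {f : (Fin n → Finset (Fin m)) → ℝ} {c : ℝ}
    (hf : ∀ T, IsAlloc T → f T ≤ c) : allocSup f ≤ c := by
  have : Nonempty {T : Fin n → Finset (Fin m) // IsAlloc T} :=
    ⟨⟨fun _ => ∅, fun _ _ _ => disjoint_bot_left⟩⟩
  exact ciSup_le fun T => hf T.1 T.2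

theorem apply_eq_of_update_invariant {α β : Type*} [DecidableEq α] {φ : (α → ℝ) → β} {j : α}
    (hφ : ∀ (t : α → ℝ) (c : ℝ), φ (Function.update t j c) = φ t) {t t' : α → ℝ}
    (htt' : ∀ l, l ≠ j → t l = t' l) : φ t = φ t' := by
  have ht : t = Function.update t' j (t j) := by
    funext l
    rcases eq_or_ne l j with rfl | hl
    · simp
    · simp [Function.update_of_ne hl, htt' l hl]
  rw [ht, hφ]

section Proxy

variable {n m : ℕ} {g : Fin n → Finset (Fin m) → (Fin n → ℝ) → ℝ}
  {h : Fin n → Finset (Fin m) → ℝ → ℝ} {B : Finset (Fin n)} {i : Fin n}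
  {ρ s : Fin n → Finset (Fin m) → ℝ}

theorem proxyW_nonneg (hg_nonneg : ∀ j T (t : Fin n → ℝ), (∀ l, 0 ≤ t l) → 0 ≤ g j T t)
    (hh_nonneg : ∀ j T c, 0 ≤ h j T c) (hs : ∀ j T, 0 ≤ s j T) (j : Fin n)
    (U : Finset (Fin m)) : 0 ≤ proxyW g h B s j U := by
  refine add_nonneg (hg_nonneg _ _ _ fun l => ?_) (hh_nonneg _ _ _)
  split_ifs
  · exact hs l U
  · exact le_rfl

theorem proxyW_eq_of_eqOn_ne (hi : i ∈ B) (hρ : ∀ l, l ≠ i → ρ l = s l) {j : Fin n}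
    (hj : j ≠ i) (U : Finset (Fin m)) : proxyW g h B ρ j U = proxyW g h B s j U := by
  have hmasked : (fun l => if l = j ∨ l ∉ B then ρ l U else 0)
      = (fun l => if l = j ∨ l ∉ B then s l U else 0) := by
    funext l
    rcases eq_or_ne l i with rfl | hl
    · simp [hj.symm, hi]
    · rw [hρ l hl]
  rw [proxyW, proxyW, hmasked, hρ j hj]

theorem sum_erase_proxyW_eq_of_eqOn_ne (hi : i ∈ B) (hρ : ∀ l, l ≠ i → ρ l = s l)
    (T : Fin n → Finset (Fin m)) :
    ∑ j ∈ B.erase i, proxyW g h B ρ j (T j) = ∑ j ∈ B.erase i, proxyW g h B s j (T j) :=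
  Finset.sum_congr rfl fun _ hj => proxyW_eq_of_eqOn_ne hi hρ (Finset.ne_of_mem_erase hj) _

theorem wMinus_eq_of_eqOn_ne (hi : i ∈ B) (hρ : ∀ l, l ≠ i → ρ l = s l) :
    wMinus g h B i ρ = wMinus g h B i s := by
  simp only [wMinus, sum_erase_proxyW_eq_of_eqOn_ne hi hρ]

theorem value_sub_rsvcgPayment_eq
    (hg_indep : ∀ j T (t : Fin n → ℝ) (c : ℝ), g j T (Function.update t j c) = g j T t)
    (hi : i ∈ B) (hρ : ∀ l, l ≠ i → ρ l = s l) (T : Fin n → Finset (Fin m)) :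
    (g i (T i) (fun l => s l (T i)) + h i (T i) (s i (T i))) - rsvcgPayment g h B i ρ T
      = ∑ j ∈ B, proxyW g h B s j (T j) - wMinus g h B i s := by
  have hfull : g i (T i) (fun l => ρ l (T i)) = g i (T i) (fun l => s l (T i)) :=
    apply_eq_of_update_invariant (hg_indep i (T i)) fun l hl => by rw [hρ l hl]
  have hmasked : g i (T i) (fun l => if l ∈ B ∧ l ≠ i then 0 else ρ l (T i))
      = g i (T i) (fun l => if l = i ∨ l ∉ B then s l (T i) else 0) :=
    apply_eq_of_update_invariant (hg_indep i (T i)) fun l hl => by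
      by_cases hlB : l ∈ B <;> simp [hl, hlB, hρ l hl]
  rw [rsvcgPayment, hfull, hmasked, sum_erase_proxyW_eq_of_eqOn_ne hi hρ,
    wMinus_eq_of_eqOn_ne hi hρ, ← Finset.add_sum_erase B _ hi, proxyW]
  ring

theorem wMinus_le_of_isMax (hi : i ∈ B) (hproxy_nonneg : ∀ U, 0 ≤ proxyW g h B s i U)
    {Tstar : Fin n → Finset (Fin m)}
    (hTstarMax : ∀ T, IsAlloc T →
      ∑ j ∈ B, proxyW g h B s j (T j) ≤ ∑ j ∈ B, proxyW g h B s j (Tstar j)) :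
    wMinus g h B i s ≤ ∑ j ∈ B, proxyW g h B s j (Tstar j) := by
  refine allocSup_le fun T hT => le_trans ?_ (hTstarMax _ (hT.update_empty i))
  rw [← Finset.add_sum_erase B _ hi, Function.update_self]
  have hothers : ∑ j ∈ B.erase i, proxyW g h B s j (Function.update T i ∅ j)
      = ∑ j ∈ B.erase i, proxyW g h B s j (T j) :=
    Finset.sum_congr rfl fun j hj => by rw [Function.update_of_ne (Finset.ne_of_mem_erase hj)]
  rw [hothers]
  exact le_add_of_nonneg_left (hproxy_nonneg ∅)

end Proxy

theorem rs_vcg_ic_ir_general (n m : ℕ)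
    (s : Fin n → Finset (Fin m) → ℝ) (hs : ∀ j T, 0 ≤ s j T)
    (g : Fin n → Finset (Fin m) → (Fin n → ℝ) → ℝ)
    (h : Fin n → Finset (Fin m) → ℝ → ℝ)
    (hg_indep : ∀ j T (t : Fin n → ℝ) (c : ℝ),
      g j T (Function.update t j c) = g j T t)
    (hg_nonneg : ∀ j T (t : Fin n → ℝ), (∀ l, 0 ≤ t l) → 0 ≤ g j T t)
    (hh_nonneg : ∀ j T c, 0 ≤ h j T c)
    (B : Finset (Fin n)) (i : Fin n) (hi : i ∈ B)
    (Tstar : Fin n → Finset (Fin m))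
    (hTstarMax : ∀ T, IsAlloc T →
      ∑ j ∈ B, proxyW g h B s j (T j) ≤ ∑ j ∈ B, proxyW g h B s j (Tstar j)) :
    (∀ r : Finset (Fin m) → ℝ,
      ∀ T' : Fin n → Finset (Fin m), IsAlloc T' →
        (∀ T, IsAlloc T →
          ∑ j ∈ B, proxyW g h B (fun l U => if l = i then r U else s l U) j (T j)
            ≤ ∑ j ∈ B, proxyW g h B (fun l U => if l = i then r U else s l U) j (T' j)) →
        (g i (T' i) (fun l => s l (T' i)) + h i (T' i) (s i (T' i)))
            - rsvcgPayment g h B i (fun l U => if l = i then r U else s l U) T'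
          ≤ (g i (Tstar i) (fun l => s l (Tstar i)) + h i (Tstar i) (s i (Tstar i)))
            - rsvcgPayment g h B i s Tstar)
    ∧ 0 ≤ (g i (Tstar i) (fun l => s l (Tstar i)) + h i (Tstar i) (s i (Tstar i)))
            - rsvcgPayment g h B i s Tstar := by
  have htruthful := value_sub_rsvcgPayment_eq (h := h) (ρ := s) hg_indep hi
    (fun _ _ => rfl) Tstar
  refine ⟨fun r T' hT' _ => ?_, ?_⟩
  · rw [value_sub_rsvcgPayment_eq hg_indep hi (fun l hl => by simp [hl]) T', htruthful]
    exact sub_le_sub_right (hTstarMax T' hT') _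
  · rw [htruthful, sub_nonneg]
    exact wMinus_le_of_isMax hi (proxyW_nonneg hg_nonneg hh_nonneg hs i) hTstarMax

/-- Theorem 5.1 (thm:rs-vcg), IC and IR: for any fixed partition with
potential-winner set `B` and any agent `i ∈ B`, with separable valuations
`v_{jT}(t) = g_{jT}(t_{−j}) + h_{jT}(t_j)` (each `g j T` ignoring coordinate
`j`, all `g`, `h` nonnegative and weakly increasing), truthful signals
`s j T ≥ 0`, a proxy-welfare-maximizing allocation `Tstar` at the truthful
profile, and for any misreport `r` of agent `i` with proxy-welfare-maximizing
allocation `T'` at the misreported profile: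
(IC) agent `i`'s true utility under the misreport is no more than under
truthful reporting; and (IR) truthful utility is nonnegative. -/
theorem rs_vcg_ic_ir (n m : ℕ)
    (s : Fin n → Finset (Fin m) → ℝ) (hs : ∀ j T, 0 ≤ s j T)
    (g : Fin n → Finset (Fin m) → (Fin n → ℝ) → ℝ)
    (h : Fin n → Finset (Fin m) → ℝ → ℝ)
    (hg_indep : ∀ j T (t : Fin n → ℝ) (c : ℝ),
      g j T (Function.update t j c) = g j T t)
    (hg_nonneg : ∀ j T (t : Fin n → ℝ), (∀ l, 0 ≤ t l) → 0 ≤ g j T t)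
    (hg_mono : ∀ j T (t t' : Fin n → ℝ), (∀ l, t l ≤ t' l) → g j T t ≤ g j T t')
    (hh_nonneg : ∀ j T c, 0 ≤ h j T c)
    (hh_mono : ∀ j T, Monotone (h j T))
    (B : Finset (Fin n)) (i : Fin n) (hi : i ∈ B)
    (Tstar : Fin n → Finset (Fin m)) (hTstar : IsAlloc Tstar)
    (hTstarMax : ∀ T, IsAlloc T →
      ∑ j ∈ B, proxyW g h B s j (T j) ≤ ∑ j ∈ B, proxyW g h B s j (Tstar j)) :
    (∀ r : Finset (Fin m) → ℝ,
      ∀ T' : Fin n → Finset (Fin m), IsAlloc T' →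
        (∀ T, IsAlloc T →
          ∑ j ∈ B, proxyW g h B (fun l U => if l = i then r U else s l U) j (T j)
            ≤ ∑ j ∈ B, proxyW g h B (fun l U => if l = i then r U else s l U) j (T' j)) →
        (g i (T' i) (fun l => s l (T' i)) + h i (T' i) (s i (T' i)))
            - rsvcgPayment g h B i (fun l U => if l = i then r U else s l U) T'
          ≤ (g i (Tstar i) (fun l => s l (Tstar i)) + h i (Tstar i) (s i (Tstar i)))
            - rsvcgPayment g h B i s Tstar)
    ∧ 0 ≤ (g i (Tstar i) (fun l => s l (Tstar i)) + h i (Tstar i) (s i (Tstar i)))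
            - rsvcgPayment g h B i s Tstar :=
  rs_vcg_ic_ir_general n m s hs g h hg_indep hg_nonneg hh_nonneg B i hi Tstar hTstarMax
end

section
/- Let n ≥ 1 and ε ≥ 0. For s ∈ {0,1}ⁿ define v_i(s) = Π_{j≠i} s_j + ε·s_i. Let x : {0,1}ⁿ → (Fin n → ℝ) satisfy x_i(s) ≥ 0 for all i, s; Σ_i x_i(s) ≤ 1 for all s; and x_i monotone in s_i, i.e. x_i(s with i-th coordinate 0) ≤ x_i(s with i-th coordinate 1) for all s. Then there exists an agent i such that, at the profile sⁱ (equal to 1 at every coordinate except 0 at coordinate i), Σ_j x_j(sⁱ)·v_j(sⁱ) ≤ 1/n + (n−1)·ε, while v_i(sⁱ) = 1. Consequently no ex-post IC feasible (possibly randomized) single-item mechanism achieves better than an n-approximation to the optimal welfare on this instance. -/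
open Finset

/-!
At the all-ones profile the allocations sum to at most `1`, so some agent `i` receives at most
`1/n` there. Lowering `i`'s own signal can only lower `i`'s allocation, so `i` also gets at
most `1/n` at `sⁱ`. At `sⁱ` agent `i` values the item at `1`, while every other agent `j` has a
zero signal among the others and values it at `ε`; hence the welfare at `sⁱ` is at most
`1/n + (n - 1)ε`.
-/

theorem exists_le_one_div_card_of_sum_le_one {ι : Type*} [Fintype ι] [Nonempty ι]
    (f : ι → ℝ) (hf : ∑ i, f i ≤ 1) : ∃ i, f i ≤ 1 / Fintype.card ι := by
  have hsum : ∑ i, f i ≤ ∑ _i : ι, 1 / (Fintype.card ι : ℝ) := by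
    rwa [sum_const, card_univ, nsmul_eq_mul, mul_one_div_cancel (by positivity)]
  obtain ⟨i, -, hi⟩ := exists_le_of_sum_le univ_nonempty hsum
  exact ⟨i, hi⟩

theorem sum_mul_le_add_card_sub_one_mul {ι : Type*} [Fintype ι] [DecidableEq ι]
    {x v : ι → ℝ} {i : ι} {c ε : ℝ} (hx : ∀ j, 0 ≤ x j) (hx_sum : ∑ j, x j ≤ 1)
    (hε : 0 ≤ ε) (hxi : x i ≤ c) (hvi : v i ≤ 1) (hv : ∀ j ≠ i, v j ≤ ε) :
    ∑ j, x j * v j ≤ c + ((Fintype.card ι : ℝ) - 1) * ε := by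
  have hx_le_one : ∀ j, x j ≤ 1 :=
    fun j => (single_le_sum (fun k _ => hx k) (mem_univ j)).trans hx_sum
  have h_self : x i * v i ≤ c := (mul_le_of_le_one_right (hx i) hvi).trans hxi
  have h_others : ∑ j ∈ univ.erase i, x j * v j ≤ ((Fintype.card ι : ℝ) - 1) * ε := by
    calc ∑ j ∈ univ.erase i, x j * v j
        ≤ ∑ _j ∈ univ.erase i, ε := sum_le_sum fun j hj =>
          (mul_le_mul_of_nonneg_left (hv j (ne_of_mem_erase hj)) (hx j)).trans
            (mul_le_of_le_one_left hε (hx_le_one j))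
      _ = ((Fintype.card ι : ℝ) - 1) * ε := by
          rw [sum_const, nsmul_eq_mul, cast_card_erase_of_mem (mem_univ i), card_univ]
  rw [← add_sum_erase _ _ (mem_univ i)]
  exact add_le_add h_self h_others

theorem prod_erase_ite_ne_eq {ι : Type*} [Fintype ι] [DecidableEq ι] (i j : ι) :
    ∏ k ∈ univ.erase j, (if (if k = i then false else true) then (1 : ℝ) else 0)
      = if j = i then 1 else 0 := by
  split_ifs with hji
  · subst hji
    exact prod_eq_one fun k hk => by simp [ne_of_mem_erase hk]
  · exact prod_eq_zero (mem_erase.2 ⟨Ne.symm hji, mem_univ i⟩) (by simp)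

theorem update_const_eq_ite {ι α : Type*} [DecidableEq ι] (a b : α) (i : ι) :
    Function.update (fun _ => a) i b = fun l => if l = i then b else a := by
  funext l
  by_cases h : l = i <;> simp [h]

/-- The lower bound of Example 1.4 (Eden et al. 2018): with `n` agents, binary
signals, and valuations `v_i(s) = Π_{j≠i} s_j + ε·s_i`, every feasible
allocation rule `x` that is monotone in each agent's own signal has an agent
`i` whose "all-ones-except-`i`" profile `sⁱ` witnesses expected welfare at
most `1/n + (n−1)·ε`, while `v_i(sⁱ) = 1`.  Hence no ex-post IC feasible
(possibly randomized) single-item mechanism beats an `n`-approximation. -/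
theorem n_lower_bound_randomized (n : ℕ) (hn : 1 ≤ n) (ε : ℝ) (hε : 0 ≤ ε)
    (v : Fin n → (Fin n → Bool) → ℝ)
    (hv : ∀ i s, v i s =
      (∏ j ∈ Finset.univ.erase i, (if s j then (1 : ℝ) else 0))
        + ε * (if s i then 1 else 0))
    (x : (Fin n → Bool) → Fin n → ℝ)
    (hnn : ∀ s i, 0 ≤ x s i)
    (hfeas : ∀ s, ∑ i, x s i ≤ 1)
    (hmono : ∀ s i, x (Function.update s i false) i ≤ x (Function.update s i true) i) :
    ∃ i : Fin n,
      (∑ j, x (fun l => if l = i then false else true) j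
          * v j (fun l => if l = i then false else true)
        ≤ 1 / (n : ℝ) + ((n : ℝ) - 1) * ε)
      ∧ v i (fun l => if l = i then false else true) = 1 := by
  have : Nonempty (Fin n) := ⟨⟨0, hn⟩⟩
  obtain ⟨i, hi⟩ := exists_le_one_div_card_of_sum_le_one _ (hfeas fun _ => true)
  rw [Fintype.card_fin] at hi
  have hxi : x (fun l => if l = i then false else true) i ≤ 1 / (n : ℝ) := by
    have h := hmono (fun _ => true) i
    rw [update_const_eq_ite, Function.update_eq_self] at h
    exact h.trans hi
  have hval : ∀ j, v j (fun l => if l = i then false else true)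
      = if j = i then 1 else ε := by
    intro j
    rw [hv, prod_erase_ite_ne_eq]
    by_cases hji : j = i <;> simp [hji]
  have hvi : v i (fun l => if l = i then false else true) = 1 :=
    (hval i).trans (if_pos rfl)
  refine ⟨i, ?_, hvi⟩
  simpa using sum_mul_le_add_card_sub_one_mul (hnn _) (hfeas _) hε hxi hvi.le
    fun j hj => (hval j).trans_le (by simp [hj])
end
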